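/- arXiv:2303.12623 — 6 statements merged into one kernel-verified Lean document; each statement's English description precedes it below -/
import Mathlib

section
/- Let (Y_t)_{t≥0} be a Yule process with parameter λ>0 (a pure birth process started from one individual where each individual gives birth at rate λ). Then for all a,b,y>0 with a≤b, P( sup_{t∈[a,b]} |log Y_t − λt| ≥ yb ) ≤ (2 + λa) · exp(−yb + λ(b−a)). -/
/-!
Since paths are nondecreasing, a deviation `|log Y_t - λ t| ≥ y b` somewhere on `[a, b]` forces
either `Y_b ≥ exp (y b + λ a)` or `Y_a ≤ exp (λ b - y b)`. Both `Y_a` and `Y_b` are geometric;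
a geometric variable of parameter `q` exceeds `x` with probability at most `1 / (q x)` and stays
below `x` with probability at most `q x`. Each bound equals `exp (-y b + λ (b - a))`.
-/

open MeasureTheory Finset

lemma natCast_mul_pow_pred_mul_one_sub_le_one {r : ℝ} (h0 : 0 ≤ r) (h1 : r ≤ 1) (m : ℕ) :
    m * r ^ (m - 1) * (1 - r) ≤ 1 := by
  have hsum : (m : ℝ) * r ^ (m - 1) ≤ ∑ k ∈ range m, r ^ k := by
    rw [← card_range m, ← nsmul_eq_mul, ← sum_const, card_range]
    exact sum_le_sum fun k hk => pow_le_pow_of_le_one h0 h1 (by grind)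
  calc (m : ℝ) * r ^ (m - 1) * (1 - r) ≤ (∑ k ∈ range m, r ^ k) * (1 - r) :=
        mul_le_mul_of_nonneg_right hsum (by linarith)
    _ = 1 - r ^ m := geom_sum_mul_neg r m
    _ ≤ 1 := by linarith [pow_nonneg h0 m]

def HasGeometricLaw {Ω : Type*} [MeasurableSpace Ω] (P : Measure Ω) (X : Ω → ℕ) (q : ℝ) : Prop :=
  ∀ k : ℕ, 1 ≤ k → P {ω | X ω = k} = ENNReal.ofReal (q * (1 - q) ^ (k - 1))

namespace HasGeometricLaw

variable {Ω : Type*} [MeasurableSpace Ω] {P : Measure Ω} {X : Ω → ℕ} {q : ℝ}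

lemma measure_le_le (hX : HasGeometricLaw P X q) (hq0 : 0 ≤ q) (hq1 : q ≤ 1)
    (hpos : ∀ ω, 1 ≤ X ω) (n : ℕ) :
    P {ω | X ω ≤ n} ≤ ENNReal.ofReal (n * q) := by
  have hsub : {ω | X ω ≤ n} ⊆ ⋃ k ∈ Icc 1 n, {ω | X ω = k} := fun ω hω =>
    Set.mem_iUnion₂.mpr ⟨X ω, mem_Icc.mpr ⟨hpos ω, hω⟩, rfl⟩
  have hatom : ∀ k ∈ Icc 1 n, P {ω | X ω = k} ≤ ENNReal.ofReal q := fun k hk => by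
    rw [hX k (mem_Icc.mp hk).1]
    exact ENNReal.ofReal_le_ofReal
      (mul_le_of_le_one_right hq0 (pow_le_one₀ (by linarith) (by linarith)))
  calc P {ω | X ω ≤ n} ≤ ∑ k ∈ Icc 1 n, P {ω | X ω = k} :=
        (measure_mono hsub).trans (measure_biUnion_finset_le _ _)
    _ ≤ #(Icc 1 n) • ENNReal.ofReal q := sum_le_card_nsmul _ _ _ hatom
    _ = ENNReal.ofReal (n * q) := by
        rw [Nat.card_Icc, Nat.add_sub_cancel, nsmul_eq_mul, ← ENNReal.ofReal_natCast,
          ← ENNReal.ofReal_mul n.cast_nonneg]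

lemma measure_cast_le_le (hX : HasGeometricLaw P X q) (hq0 : 0 ≤ q) (hq1 : q ≤ 1)
    (hpos : ∀ ω, 1 ≤ X ω) {x : ℝ} (hx : 0 ≤ x) :
    P {ω | (X ω : ℝ) ≤ x} ≤ ENNReal.ofReal (x * q) := by
  have hset : {ω | (X ω : ℝ) ≤ x} = {ω | X ω ≤ ⌊x⌋₊} := by
    ext ω; exact (Nat.le_floor_iff hx).symm
  rw [hset]
  exact (hX.measure_le_le hq0 hq1 hpos _).trans
    (ENNReal.ofReal_le_ofReal (mul_le_mul_of_nonneg_right (Nat.floor_le hx) hq0))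

lemma measure_ge_le (hX : HasGeometricLaw P X q) (hq0 : 0 < q) (hq1 : q ≤ 1) {m : ℕ}
    (hm : 1 ≤ m) : P {ω | m ≤ X ω} ≤ ENNReal.ofReal ((1 - q) ^ (m - 1)) := by
  have hsub : {ω | m ≤ X ω} ⊆ ⋃ k : ℕ, {ω | X ω = m + k} := fun ω hω =>
    Set.mem_iUnion.mpr ⟨X ω - m, show X ω = m + (X ω - m) by grind⟩
  have hatom : ∀ k : ℕ, P {ω | X ω = m + k} =
      ENNReal.ofReal (q * (1 - q) ^ (m - 1) * (1 - q) ^ k) := fun k => by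
    rw [hX _ (by omega), show m + k - 1 = m - 1 + k by omega, pow_add, mul_assoc]
  have hnonneg : ∀ k : ℕ, 0 ≤ q * (1 - q) ^ (m - 1) * (1 - q) ^ k := fun k => by
    have : 0 ≤ 1 - q := by linarith
    positivity
  have hsummable : Summable fun k : ℕ => q * (1 - q) ^ (m - 1) * (1 - q) ^ k :=
    (summable_geometric_of_lt_one (by linarith) (by linarith)).mul_left _
  calc P {ω | m ≤ X ω} ≤ ∑' k : ℕ, P {ω | X ω = m + k} :=
        (measure_mono hsub).trans (measure_iUnion_le _)
    _ = ENNReal.ofReal (∑' k : ℕ, q * (1 - q) ^ (m - 1) * (1 - q) ^ k) := by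
        simp_rw [hatom]; exact (ENNReal.ofReal_tsum_of_nonneg hnonneg hsummable).symm
    _ = ENNReal.ofReal ((1 - q) ^ (m - 1)) := by
        rw [tsum_mul_left, tsum_geometric_of_lt_one (by linarith) (by linarith), sub_sub_cancel,
          mul_comm q, mul_assoc, mul_inv_cancel₀ hq0.ne', mul_one]

lemma measure_le_cast_le (hX : HasGeometricLaw P X q) (hq0 : 0 < q) (hq1 : q ≤ 1)
    {x : ℝ} (hx : 0 < x) : P {ω | x ≤ (X ω : ℝ)} ≤ ENNReal.ofReal (q * x)⁻¹ := by
  set m : ℕ := ⌈x⌉₊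
  have hm : 1 ≤ m := Nat.one_le_ceil_iff.mpr hx
  have hset : {ω | x ≤ (X ω : ℝ)} = {ω | m ≤ X ω} := by
    ext ω; exact (Nat.ceil_le (a := x)).symm
  have hpow : (1 - q) ^ (m - 1) ≤ (q * m)⁻¹ := by
    have key := natCast_mul_pow_pred_mul_one_sub_le_one (r := 1 - q) (by linarith) (by linarith) m
    rw [sub_sub_cancel] at key
    rw [← mul_one (q * m)⁻¹, le_inv_mul_iff₀ (by positivity)]
    linarith
  rw [hset]
  exact (hX.measure_ge_le hq0 hq1 hm).trans (ENNReal.ofReal_le_ofReal (hpow.trans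
    (inv_anti₀ (by positivity) (mul_le_mul_of_nonneg_left (Nat.le_ceil x) hq0.le))))

end HasGeometricLaw

lemma exp_le_or_le_exp_of_le_abs_log_sub {f : ℝ → ℝ} {a b c lam t : ℝ}
    (hf : MonotoneOn f (Set.Icc a b)) (hfa : 0 < f a) (hlam : 0 ≤ lam) (ht : t ∈ Set.Icc a b)
    (hdev : c ≤ |Real.log (f t) - lam * t|) :
    Real.exp (c + lam * a) ≤ f b ∨ f a ≤ Real.exp (lam * b - c) := by
  have hab : a ≤ b := ht.1.trans ht.2
  have hat : f a ≤ f t := hf ⟨le_rfl, hab⟩ ht ht.1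
  have htb : f t ≤ f b := hf ht ⟨hab, le_rfl⟩ ht.2
  have hft : 0 < f t := hfa.trans_le hat
  have hlamt : lam * a ≤ lam * t ∧ lam * t ≤ lam * b :=
    ⟨mul_le_mul_of_nonneg_left ht.1 hlam, mul_le_mul_of_nonneg_left ht.2 hlam⟩
  rcases le_abs.mp hdev with hup | hdown
  · left
    rw [← Real.le_log_iff_exp_le (hft.trans_le htb)]
    linarith [Real.log_le_log hft htb]
  · right
    rw [← Real.log_le_iff_le_exp hfa]
    linarith [Real.log_le_log hfa hat]

theorem yule_sup_log_deviation_bound_general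
    {Ω : Type*} [MeasurableSpace Ω] (P : Measure Ω)
    (lam : ℝ) (hlam : 0 < lam)
    (Y : ℝ → Ω → ℕ)
    (hstart : ∀ ω, Y 0 ω = 1)
    (hmono : ∀ ω ⦃s t : ℝ⦄, 0 ≤ s → s ≤ t → Y s ω ≤ Y t ω)
    (hlaw : ∀ t : ℝ, 0 ≤ t → ∀ k : ℕ, 1 ≤ k →
      P {ω | Y t ω = k} =
        ENNReal.ofReal (Real.exp (-lam * t) * (1 - Real.exp (-lam * t)) ^ (k - 1)))
    (a b y : ℝ) (ha : 0 < a) (hab : a ≤ b) :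
    P {ω | ∃ t ∈ Set.Icc a b, y * b ≤ |Real.log (Y t ω : ℝ) - lam * t|} ≤
      ENNReal.ofReal ((2 + lam * a) * Real.exp (-(y * b) + lam * (b - a))) := by
  have hb : 0 ≤ b := ha.le.trans hab
  have hpos : ∀ t, 0 ≤ t → ∀ ω, 1 ≤ Y t ω := fun t ht ω => hstart ω ▸ hmono ω le_rfl ht
  have hsub : {ω | ∃ t ∈ Set.Icc a b, y * b ≤ |Real.log (Y t ω : ℝ) - lam * t|} ⊆
      {ω | Real.exp (y * b + lam * a) ≤ (Y b ω : ℝ)} ∪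
        {ω | (Y a ω : ℝ) ≤ Real.exp (lam * b - y * b)} := by
    rintro ω ⟨t, ht, hdev⟩
    refine exp_le_or_le_exp_of_le_abs_log_sub (f := fun t => (Y t ω : ℝ))
      (fun s hs t _ hst => Nat.cast_le.mpr (hmono ω (ha.le.trans hs.1) hst))
      (Nat.cast_pos.mpr (hpos a ha.le ω)) hlam.le ht hdev
  have hgeom : ∀ t, 0 ≤ t → HasGeometricLaw P (Y t) (Real.exp (-lam * t)) := hlaw
  have hexp_le_one : ∀ t, 0 ≤ t → Real.exp (-lam * t) ≤ 1 := fun t ht =>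
    Real.exp_le_one_iff.mpr (by nlinarith)
  have hupper : P {ω | Real.exp (y * b + lam * a) ≤ (Y b ω : ℝ)} ≤
      ENNReal.ofReal (Real.exp (-(y * b) + lam * (b - a))) := by
    convert (hgeom b hb).measure_le_cast_le (Real.exp_pos _) (hexp_le_one b hb)
      (Real.exp_pos _) using 2
    rw [← Real.exp_add, ← Real.exp_neg]
    congr 1; ring
  have hlower : P {ω | (Y a ω : ℝ) ≤ Real.exp (lam * b - y * b)} ≤
      ENNReal.ofReal (Real.exp (-(y * b) + lam * (b - a))) := by
    convert (hgeom a ha.le).measure_cast_le_le (Real.exp_pos _).le (hexp_le_one a ha.le)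
      (hpos a ha.le) (Real.exp_pos _).le using 2
    rw [← Real.exp_add]
    congr 1; ring
  calc _ ≤ _ :=
        (measure_mono hsub).trans ((measure_union_le _ _).trans (add_le_add hupper hlower))
    _ = ENNReal.ofReal (2 * Real.exp (-(y * b) + lam * (b - a))) := by
        rw [← ENNReal.ofReal_add (by positivity) (by positivity), two_mul]
    _ ≤ _ := ENNReal.ofReal_le_ofReal (mul_le_mul_of_nonneg_right
        (le_add_of_nonneg_right (mul_pos hlam ha).le) (Real.exp_pos _).le)

/-- A large deviations bound for the Yule process: if `(Y t)` is a Yule process of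
parameter `lam > 0` (pure birth process started from one individual, with marginal law
`P(Y t = k) = exp(-lam t)(1-exp(-lam t))^(k-1)` and nondecreasing paths), then for all
`0 < a ≤ b` and `y > 0`,
`P(sup_{t ∈ [a,b]} |log Y_t - lam t| ≥ y b) ≤ (2 + lam a) exp(-y b + lam (b-a))`. -/
theorem yule_sup_log_deviation_bound
    {Ω : Type*} [MeasurableSpace Ω] (P : Measure Ω) [IsProbabilityMeasure P]
    (lam : ℝ) (hlam : 0 < lam)
    (Y : ℝ → Ω → ℕ)
    (hstart : ∀ ω, Y 0 ω = 1)
    (hmono : ∀ ω ⦃s t : ℝ⦄, 0 ≤ s → s ≤ t → Y s ω ≤ Y t ω)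
    (hlaw : ∀ t : ℝ, 0 ≤ t → ∀ k : ℕ, 1 ≤ k →
      P {ω | Y t ω = k} =
        ENNReal.ofReal (Real.exp (-lam * t) * (1 - Real.exp (-lam * t)) ^ (k - 1)))
    (a b y : ℝ) (ha : 0 < a) (hy : 0 < y) (hab : a ≤ b) :
    P {ω | ∃ t ∈ Set.Icc a b, y * b ≤ |Real.log (Y t ω : ℝ) - lam * t|} ≤
      ENNReal.ofReal ((2 + lam * a) * Real.exp (-(y * b) + lam * (b - a))) :=
  yule_sup_log_deviation_bound_general P lam hlam Y hstart hmono hlaw a b y ha hab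
end

section
/- In the setting of the previous identity, for any ε>0 and x > −v_t/w_t, 0 ≤ π(A_t(x)) − π(A_t(x+ε)) ≤ ε θ t w_t μ((v_t + x w_t, M)) / (v_t + x w_t). -/
open MeasureTheory Set

/-! A point `(s, y)` of `A_t(x)` outside `A_t(x + ε)` has mark `y > v + x w`, and for a fixed
mark its time `s` is confined to an interval of length `ε t w / y ≤ ε t w / (v + x w)`.
Integrating this slice bound over the marks (Fubini) gives the estimate. -/

/-- The set `A_t(x)` of the paper, with `c = t v_t + x t w_t`. -/
def exceedSet (t c : ℝ) : Set (ℝ × ℝ) :=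
  {p | p.1 ∈ Icc 0 t ∧ c < p.2 * (t - p.1)}

def band (a : ℝ) (f g : ℝ → ℝ) : Set (ℝ × ℝ) :=
  {p | a < p.2 ∧ p.1 ∈ Icc (f p.2) (g p.2)}

lemma exceedSet_anti {t c c' : ℝ} (h : c ≤ c') : exceedSet t c' ⊆ exceedSet t c :=
  fun _ ⟨hs, hp⟩ => ⟨hs, h.trans_lt hp⟩

lemma exceedSet_subset_union_band {t a : ℝ} (ha : 0 ≤ a) (c' : ℝ) :
    exceedSet t (t * a) ⊆
      exceedSet t c' ∪ band a (fun y => t - c' / y) (fun y => t - t * a / y) := by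
  rintro ⟨s, y⟩ ⟨⟨hs0, hst⟩, hlt⟩
  by_cases hc' : c' < y * (t - s)
  · exact Or.inl ⟨⟨hs0, hst⟩, hc'⟩
  have hay : a < y := by
    by_contra! h
    nlinarith [mul_le_mul_of_nonneg_right h (sub_nonneg.2 hst)]
  have hy : 0 < y := ha.trans_lt hay
  refine Or.inr ⟨hay, ?_, ?_⟩
  · rw [sub_le_comm, le_div_iff₀ hy]
    linarith
  · rw [le_sub_comm, div_le_iff₀ hy]
    linarith

lemma measurableSet_band (a : ℝ) {f g : ℝ → ℝ} (hf : Measurable f) (hg : Measurable g) :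
    MeasurableSet (band a f g) :=
  (measurableSet_lt measurable_const measurable_snd).inter
    ((measurableSet_le (hf.comp measurable_snd) measurable_fst).inter
      (measurableSet_le measurable_fst (hg.comp measurable_snd)))

lemma prod_band_le {ν μ : Measure ℝ} [SFinite ν] [SFinite μ] {C : ENNReal}
    (hν : ∀ l u, ν (Icc l u) ≤ C * ENNReal.ofReal (u - l)) {f g : ℝ → ℝ}
    (hf : Measurable f) (hg : Measurable g) {a L : ℝ} (hL : ∀ y, a < y → g y - f y ≤ L) :
    ν.prod μ (band a f g) ≤ C * ENNReal.ofReal L * μ (Ioi a) := by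
  rw [Measure.prod_apply_symm (measurableSet_band a hf hg),
    ← lintegral_indicator_const measurableSet_Ioi]
  refine lintegral_mono fun y => ?_
  by_cases hy : a < y
  · rw [indicator_of_mem (mem_Ioi.2 hy)]
    calc ν ((fun s => (s, y)) ⁻¹' band a f g) = ν (Icc (f y) (g y)) := by
          congr 1; ext s; simp [band, hy]
      _ ≤ C * ENNReal.ofReal (g y - f y) := hν _ _
      _ ≤ C * ENNReal.ofReal L := by gcongr; exact hL y hy
  · simp [band, hy]

lemma smul_restrict_volume_Icc_le (C : ENNReal) (S : Set ℝ) (l u : ℝ) :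
    (C • volume.restrict S) (Icc l u) ≤ C * ENNReal.ofReal (u - l) := by
  rw [Measure.smul_apply, smul_eq_mul, ← Real.volume_Icc]
  gcongr
  exact Measure.restrict_le_self

theorem intensity_measure_difference_bound_general
    (θ t v w x ε : ℝ) (ht : 0 < t) (hw : 0 < w)
    (hx : -v / w < x) (hε : 0 < ε)
    (μ : Measure ℝ) [IsProbabilityMeasure μ]
    (π : Measure (ℝ × ℝ))
    (hπ : π = (ENNReal.ofReal θ • (volume.restrict (Set.Ici (0 : ℝ)))).prod μ) :
    π {p : ℝ × ℝ | p.1 ∈ Set.Icc 0 t ∧ t * v + (x + ε) * t * w < p.2 * (t - p.1)} ≤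
      π {p : ℝ × ℝ | p.1 ∈ Set.Icc 0 t ∧ t * v + x * t * w < p.2 * (t - p.1)} ∧
    π {p : ℝ × ℝ | p.1 ∈ Set.Icc 0 t ∧ t * v + x * t * w < p.2 * (t - p.1)} ≤
      π {p : ℝ × ℝ | p.1 ∈ Set.Icc 0 t ∧ t * v + (x + ε) * t * w < p.2 * (t - p.1)} +
        ENNReal.ofReal (ε * θ * (t * w) * (μ (Set.Ioi (v + x * w))).toReal / (v + x * w)) := by
  set a := v + x * w
  have ha : 0 < a := by have := (div_lt_iff₀ hw).mp hx; linarith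
  have hεtw : 0 < ε * t * w := by positivity
  set c' := t * v + (x + ε) * t * w
  set B := band a (fun y => t - c' / y) (fun y => t - t * a / y)
  refine ⟨measure_mono (exceedSet_anti (by linarith)), ?_⟩
  have hB : π B ≤ ENNReal.ofReal θ * ENNReal.ofReal (ε * t * w / a) * μ (Ioi a) := by
    rw [hπ]
    refine prod_band_le (smul_restrict_volume_Icc_le _ _) (by fun_prop) (by fun_prop)
      fun y hy => ?_
    have hwidth : (t - t * a / y) - (t - c' / y) = ε * t * w / y := by
      field_simp [(ha.trans hy).ne']
      ring
    exact hwidth ▸ div_le_div_of_nonneg_left hεtw.le ha hy.le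
  have hB_eq : ENNReal.ofReal θ * ENNReal.ofReal (ε * t * w / a) * μ (Ioi a) =
      ENNReal.ofReal (ε * θ * (t * w) * (μ (Ioi a)).toReal / a) := by
    rw [show ε * θ * (t * w) * (μ (Ioi a)).toReal / a =
        θ * (ε * t * w / a) * (μ (Ioi a)).toReal by ring,
      ENNReal.ofReal_mul' ENNReal.toReal_nonneg, ENNReal.ofReal_mul' (by positivity),
      ENNReal.ofReal_toReal (measure_ne_top μ (Ioi a))]
  rw [show t * v + x * t * w = t * a by ring]
  calc π (exceedSet t (t * a)) ≤ π (exceedSet t c' ∪ B) :=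
        measure_mono (exceedSet_subset_union_band ha.le c')
    _ ≤ π (exceedSet t c') + π B := measure_union_le _ _
    _ ≤ _ := add_le_add_right (hB.trans_eq hB_eq) _

/-- Difference bound for the intensity measure: with
`A_t(x) = {(s,w) ∈ [0,t] × [0,M) : w(t-s) > t v_t + x t w_t}` and `π = θ ds ⊗ dμ`,
for any `ε > 0` and `x > -v_t/w_t`,
`0 ≤ π(A_t(x)) - π(A_t(x+ε)) ≤ ε θ t w_t μ((v_t + x w_t, ∞)) / (v_t + x w_t)`,
stated as the two inequalities `π(A_t(x+ε)) ≤ π(A_t(x))` and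
`π(A_t(x)) ≤ π(A_t(x+ε)) + ε θ t w_t μ((v_t + x w_t, ∞)) / (v_t + x w_t)`. -/
theorem intensity_measure_difference_bound
    (θ t v w x ε : ℝ) (hθ : 0 < θ) (ht : 0 < t) (hv : 0 ≤ v) (hw : 0 < w)
    (hx : -v / w < x) (hε : 0 < ε)
    (μ : Measure ℝ) [IsProbabilityMeasure μ] (hsupp : μ (Set.Iic 0) = 0)
    (π : Measure (ℝ × ℝ))
    (hπ : π = (ENNReal.ofReal θ • (volume.restrict (Set.Ici (0 : ℝ)))).prod μ) :
    π {p : ℝ × ℝ | p.1 ∈ Set.Icc 0 t ∧ t * v + (x + ε) * t * w < p.2 * (t - p.1)} ≤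
      π {p : ℝ × ℝ | p.1 ∈ Set.Icc 0 t ∧ t * v + x * t * w < p.2 * (t - p.1)} ∧
    π {p : ℝ × ℝ | p.1 ∈ Set.Icc 0 t ∧ t * v + x * t * w < p.2 * (t - p.1)} ≤
      π {p : ℝ × ℝ | p.1 ∈ Set.Icc 0 t ∧ t * v + (x + ε) * t * w < p.2 * (t - p.1)} +
        ENNReal.ofReal (ε * θ * (t * w) * (μ (Set.Ioi (v + x * w))).toReal / (v + x * w)) :=
  intensity_measure_difference_bound_general θ t v w x ε ht hw hx hε μ π hπ
end

section
/- With μ, A, B as in the previous statement (μ((1−x,1)) = exp(1−x^{-α})), there exists C>0 such that for all t ≥ e and all x with −α(1+log t) < x < (α/2)(1+log t), t·μ((A(t)+xB(t), 1)) ≥ exp(−x − C x²/(α²(1+log t))). -/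
/-!
Put `L = 1 + log t` and `y = x / (α L)`. The threshold is `A t + x B t = 1 - (1 - y) L^(-1/α)`, so the
tail formula (with `μ = 1` on thresholds below `0`) gives `t μ(…) = exp (L - max (L (1 - y)^(-α)) 1)`.
Both terms of the max are at most `L (1 + α y + C y²) = L + x + C x² / (α² L)`: the first since
`(1 - y)^(-α) ≤ exp (α y / (1 - y))` and `exp w ≤ 1 + w + e^α w²` for `w ≤ α`; the second since
`C ≥ α² / 2` forces `1 + α y + C y² ≥ 1 / 2`, while `L ≥ 2`.
-/

open Real Set MeasureTheory

lemma exp_le_one_add_add_exp_mul_sq {w M : ℝ} (hM : 0 ≤ M) (hw : w ≤ M) :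
    exp w ≤ 1 + w + exp M * w ^ 2 := by
  have hexpM : 1 ≤ exp M := one_le_exp hM
  rcases lt_or_ge w (-1) with hneg | hw₁
  · have : exp w ≤ 1 := exp_le_one_iff.mpr (by linarith)
    nlinarith
  rcases le_or_gt w 1 with hw₂ | hpos
  · have h := (abs_le.mp (abs_exp_sub_one_sub_id_le (abs_le.mpr ⟨hw₁, hw₂⟩))).2
    nlinarith [sq_nonneg w]
  · have h1 : exp M ≤ exp M * w ^ 2 := le_mul_of_one_le_right (exp_pos M).le (by nlinarith)
    linarith [exp_le_exp.mpr hw]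

lemma one_sub_rpow_neg_le_exp {α y : ℝ} (hα : 0 ≤ α) (hy : y < 1) :
    (1 - y) ^ (-α) ≤ exp (α * y / (1 - y)) := by
  have h1y : 0 < 1 - y := by linarith
  rw [rpow_def_of_pos h1y, exp_le_exp]
  have hlog : 1 - (1 - y)⁻¹ ≤ log (1 - y) := one_sub_inv_le_log_of_pos h1y
  have hinv : 1 - (1 - y)⁻¹ = -(y / (1 - y)) := by field_simp; ring
  rw [hinv] at hlog
  rw [mul_div_assoc]
  nlinarith

lemma one_sub_rpow_neg_le {α y : ℝ} (hα : 0 ≤ α) (hy : y ≤ 1 / 2) :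
    (1 - y) ^ (-α) ≤ 1 + α * y + (2 * α + 4 * α ^ 2 * exp α) * y ^ 2 := by
  have h1y : 1 / 2 ≤ 1 - y := by linarith
  set w := α * y / (1 - y) with hw
  have hwα : w ≤ α := by
    rw [hw, div_le_iff₀ (by linarith)]; nlinarith
  have hw_lin : w ≤ α * y + 2 * α * y ^ 2 := by
    rw [hw, div_le_iff₀ (by linarith)]; nlinarith [sq_nonneg y, mul_nonneg hα (sq_nonneg y)]
  have hw_sq : w ^ 2 ≤ 4 * α ^ 2 * y ^ 2 := by
    have hquarter : 1 / 4 ≤ (1 - y) ^ 2 := by nlinarith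
    rw [hw, div_pow, div_le_iff₀ (by positivity)]
    nlinarith [mul_le_mul_of_nonneg_left hquarter (sq_nonneg (α * y))]
  calc (1 - y) ^ (-α) ≤ exp w := one_sub_rpow_neg_le_exp hα (by linarith)
    _ ≤ 1 + w + exp α * w ^ 2 := exp_le_one_add_add_exp_mul_sq hα hwα
    _ ≤ 1 + α * y + (2 * α + 4 * α ^ 2 * exp α) * y ^ 2 := by
      nlinarith [mul_le_mul_of_nonneg_left hw_sq (exp_pos α).le]

lemma half_le_one_add_mul_add_mul_sq {α C y : ℝ} (hC : α ^ 2 / 2 ≤ C) :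
    1 / 2 ≤ 1 + α * y + C * y ^ 2 := by
  nlinarith [sq_nonneg (1 + α * y), mul_le_mul_of_nonneg_right hC (sq_nonneg y)]

lemma toReal_measure_Ioo_one_sub {α : ℝ} (hα : 0 < α) {μ : Measure ℝ} [IsProbabilityMeasure μ]
    (hμ : ∀ x : ℝ, 0 < x → x ≤ 1 → μ (Ioo (1 - x) 1) = ENNReal.ofReal (exp (1 - x ^ (-α))))
    {u : ℝ} (hu : 0 < u) :
    (μ (Ioo (1 - u) 1)).toReal = exp (1 - max (u ^ (-α)) 1) := by
  rcases le_or_gt u 1 with hu₁ | hu₁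
  · rw [hμ u hu hu₁, ENNReal.toReal_ofReal (exp_nonneg _),
      max_eq_left (one_le_rpow_of_pos_of_le_one_of_nonpos hu hu₁ (by linarith))]
  · have hIoo : μ (Ioo 0 1) = 1 := by simpa using hμ 1 one_pos le_rfl
    have hfull : μ (Ioo (1 - u) 1) = 1 :=
      le_antisymm prob_le_one (hIoo ▸ measure_mono (Ioo_subset_Ioo_left (by linarith)))
    rw [hfull, max_eq_right (rpow_lt_one_of_one_lt_of_neg hu₁ (by linarith)).le]
    simp

lemma one_sub_rpow_add_mul_rpow {α L : ℝ} (hα : α ≠ 0) (hL : 0 < L) (x : ℝ) :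
    1 - L ^ (-(1 / α)) + x * ((1 / α) * L ^ (-((α + 1) / α))) =
      1 - (1 - x / (α * L)) * L ^ (-(1 / α)) := by
  have hsplit : L ^ (-((α + 1) / α)) = L ^ (-(1 / α)) * L⁻¹ := by
    rw [show -((α + 1) / α) = -(1 / α) + -1 by field_simp; ring, rpow_add hL, rpow_neg_one]
  rw [hsplit]
  field_simp
  ring

lemma mul_rpow_neg_one_div_rpow_neg {α L v : ℝ} (hα : α ≠ 0) (hL : 0 ≤ L) (hv : 0 ≤ v) :
    (v * L ^ (-(1 / α))) ^ (-α) = v ^ (-α) * L := by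
  rw [mul_rpow hv (rpow_nonneg hL _), ← rpow_mul hL, show -(1 / α) * -α = 1 by field_simp,
    rpow_one]

theorem gumbel_bounded_lower_bound_general
    (α : ℝ) (hα : 0 < α)
    (μ : MeasureTheory.Measure ℝ) [MeasureTheory.IsProbabilityMeasure μ]
    (hμ : ∀ x : ℝ, 0 < x → x ≤ 1 →
      μ (Set.Ioo (1 - x) 1) = ENNReal.ofReal (Real.exp (1 - x ^ (-α))))
    (A B : ℝ → ℝ)
    (hA : ∀ t, A t = 1 - (1 + Real.log t) ^ (-(1 / α)))
    (hB : ∀ t, B t = (1 / α) * (1 + Real.log t) ^ (-((α + 1) / α))) :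
    ∃ C : ℝ, 0 < C ∧ ∀ t : ℝ, Real.exp 1 ≤ t → ∀ x : ℝ,
      -(α * (1 + Real.log t)) < x → x < (α / 2) * (1 + Real.log t) →
      Real.exp (-x - C * x ^ 2 / (α ^ 2 * (1 + Real.log t))) ≤
        t * (μ (Set.Ioo (A t + x * B t) 1)).toReal := by
  set C := 2 * α + 4 * α ^ 2 * exp α
  have hC : α ^ 2 / 2 ≤ C := by nlinarith [one_le_exp hα.le, sq_nonneg α]
  refine ⟨C, by positivity, fun t ht x _ hx => ?_⟩
  have ht₀ : 0 < t := (exp_pos 1).trans_le ht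
  set L := 1 + log t
  have hL : 2 ≤ L := by linarith [(le_log_iff_exp_le ht₀).mpr ht]
  set y := x / (α * L)
  have hy : y ≤ 1 / 2 := by
    rw [div_le_iff₀ (by positivity)]; linarith
  have hu : 0 < (1 - y) * L ^ (-(1 / α)) := mul_pos (by linarith) (rpow_pos_of_pos (by linarith) _)
  rw [hA, hB, one_sub_rpow_add_mul_rpow hα.ne' (by linarith), toReal_measure_Ioo_one_sub hα hμ hu,
    mul_rpow_neg_one_div_rpow_neg hα.ne' (by linarith) (by linarith),
    ← exp_log ht₀, ← exp_add, exp_le_exp]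
  have hbound : max ((1 - y) ^ (-α) * L) 1 ≤ L * (1 + α * y + C * y ^ 2) := by
    refine max_le ?_ ?_
    · rw [mul_comm]
      exact mul_le_mul_of_nonneg_left (one_sub_rpow_neg_le hα.le hy) (by linarith)
    · nlinarith [half_le_one_add_mul_add_mul_sq (y := y) hC]
  have hexpand : L * (1 + α * y + C * y ^ 2) = L + x + C * x ^ 2 / (α ^ 2 * L) := by
    simp only [y]; field_simp
  linarith

/-- Bounded Gumbel example, lower bound: for the distribution on `[0,1)` with
`μ((1-x,1)) = exp(1 - x^{-α})` for `x ∈ (0,1]`, with `A(t) = 1 - (1+log t)^{-1/α}` and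
`B(t) = (1/α)(1+log t)^{-(α+1)/α}`, there exists `C > 0` such that for all `t ≥ e`
and all `x` with `-α(1+log t) < x < (α/2)(1+log t)`,
`t μ((A(t)+xB(t),1)) ≥ exp(-x - C x²/(α²(1+log t)))`. -/
theorem gumbel_bounded_lower_bound
    (α : ℝ) (hα : 0 < α)
    (μ : MeasureTheory.Measure ℝ) [MeasureTheory.IsProbabilityMeasure μ]
    (hsupp₀ : μ (Set.Iic 0) = 0) (hsupp₁ : μ (Set.Ici 1) = 0)
    (hμ : ∀ x : ℝ, 0 < x → x ≤ 1 →
      μ (Set.Ioo (1 - x) 1) = ENNReal.ofReal (Real.exp (1 - x ^ (-α))))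
    (A B : ℝ → ℝ)
    (hA : ∀ t, A t = 1 - (1 + Real.log t) ^ (-(1 / α)))
    (hB : ∀ t, B t = (1 / α) * (1 + Real.log t) ^ (-((α + 1) / α))) :
    ∃ C : ℝ, 0 < C ∧ ∀ t : ℝ, Real.exp 1 ≤ t → ∀ x : ℝ,
      -(α * (1 + Real.log t)) < x → x < (α / 2) * (1 + Real.log t) →
      Real.exp (-x - C * x ^ 2 / (α ^ 2 * (1 + Real.log t))) ≤
        t * (μ (Set.Ioo (A t + x * B t) 1)).toReal :=
  gumbel_bounded_lower_bound_general α hα μ hμ A B hA hB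
end

section
/- Consider the disordered Chinese restaurant process in continuous time: tables are created at the jump times τ_1 < τ_2 < … of a rate-θ Poisson process (with τ_0 = 0 and table 1 created at time 0), each table n carries an i.i.d. weight W_n with law μ on (0,∞), and the size of table n is Z_n(t) = Y_n(W_n(t−τ_n))·1_{t≥τ_n} for i.i.d. rate-1 Yule processes Y_n. If essup μ = a < ∞ and μ has no atom at a, then letting M(t) be the number of occupied tables and N(t) = Σ_n Z_n(t) the total number of customers, M(t)/log N(t) → θ/a almost surely as t→∞. If essup μ = ∞, then M(t)/log N(t) → 0 almost surely. -/
/-!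
Fix a realization. The strong law of large numbers gives `τ_n ~ n / θ`, hence `M(t) ~ θ t`.
Given `Y(t)`, a geometric variable of parameter `e^{-t}`, Borel–Cantelli shows that every Yule
process eventually exceeds `e^{ct}` for each `c < 1`, and that, uniformly over the `O(t)` tables
open at time `t`, `Y_n(a t) ≤ e^{ct}` for each `c > a`. A single table of weight `w` therefore
forces `log N(t) ≥ (w - ε) t`, while `W_n ≤ a` gives `N(t) ≤ M(t) e^{(a + ε) t}`. By
independence the weights come arbitrarily close to `essup μ`, so `log N(t) / t` tends to `a`
(resp. to `∞`), and `M(t) / log N(t)` to `θ / a` (resp. to `0`).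
-/

open MeasureTheory ProbabilityTheory Filter Topology Real
open scoped ENNReal

section Counting

variable {u : ℕ → ℝ}

lemma tendsto_atTop_of_tendsto_div {c : ℝ} (hc : 0 < c)
    (hlim : Tendsto (fun n : ℕ => u n / n) atTop (𝓝 c)) : Tendsto u atTop atTop := by
  refine (Tendsto.pos_mul_atTop hc hlim tendsto_natCast_atTop_atTop).congr' ?_
  filter_upwards [eventually_ne_atTop 0] with n hn
  field_simp

lemma setOf_le_eq_Iio_ncard (hu : Monotone u) (hu_top : Tendsto u atTop atTop) (t : ℝ) :
    {n | u n ≤ t} = Set.Iio {n | u n ≤ t}.ncard := by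
  have hex : ∃ k, t < u k := (hu_top.eventually_gt_atTop t).exists
  have hfind : {n | u n ≤ t} = Set.Iio (Nat.find hex) := by
    ext n
    simp only [Set.mem_ofPred_eq, Set.mem_Iio, Nat.lt_find_iff, not_lt]
    exact ⟨fun h m hm => (hu hm).trans h, fun h => h n le_rfl⟩
  rw [hfind, Set.ncard_Iio_nat]

lemma tendsto_ncard_setOf_le_div (hu : Monotone u) {c : ℝ} (hc : 0 < c)
    (hlim : Tendsto (fun n : ℕ => u n / n) atTop (𝓝 c)) :
    Tendsto (fun t => ({n | u n ≤ t}.ncard : ℝ) / t) atTop (𝓝 c⁻¹) := by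
  have hu_top := tendsto_atTop_of_tendsto_div hc hlim
  set F : ℝ → ℕ := fun t => {n | u n ≤ t}.ncard
  have hF : ∀ t n, u n ≤ t ↔ n < F t := fun t n =>
    Set.ext_iff.1 (setOf_le_eq_Iio_ncard hu hu_top t) n
  have hF_top : Tendsto F atTop atTop := tendsto_atTop.2 fun n =>
    (eventually_ge_atTop (u n)).mono fun t ht => ((hF t n).1 ht).le
  have hshift : Tendsto (fun k : ℕ => u (k - 1) / k) atTop (𝓝 c) := by
    refine (tendsto_add_atTop_iff_nat 1).1 ?_
    have := hlim.mul (tendsto_natCast_div_add_atTop (1 : ℝ))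
    rw [mul_one] at this
    refine this.congr' ?_
    filter_upwards [eventually_ne_atTop 0] with k hk
    simp only [add_tsub_cancel_right, Nat.cast_add, Nat.cast_one]
    field_simp
  -- `t / F t` is squeezed between `u (F t - 1) / F t` and `u (F t) / F t`
  have hsqueeze : Tendsto (fun t => t / F t) atTop (𝓝 c) := by
    refine tendsto_of_tendsto_of_tendsto_of_le_of_le' (hshift.comp hF_top) (hlim.comp hF_top)
      ?_ ?_
    · filter_upwards [hF_top.eventually_ge_atTop 1] with t ht
      exact div_le_div_of_nonneg_right ((hF t _).2 (by omega)) (Nat.cast_nonneg _)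
    · filter_upwards with t
      exact div_le_div_of_nonneg_right (not_le.1 fun h => lt_irrefl _ ((hF t _).1 h)).le
        (Nat.cast_nonneg _)
  simpa only [inv_div] using hsqueeze.inv₀ hc.ne'

end Counting

section GrowthRate

variable {f : ℝ → ℝ}

lemma tendsto_log_div_of_exp_bounds {a : ℝ}
    (hlow : ∀ c < a, ∀ᶠ t in atTop, exp (c * t) ≤ f t)
    (hup : ∀ c > a, ∀ᶠ t in atTop, f t ≤ exp (c * t)) :
    Tendsto (fun t => log (f t) / t) atTop (𝓝 a) := by
  refine tendsto_order.2 ⟨fun c hc => ?_, fun c hc => ?_⟩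
  · obtain ⟨c', hc, hc'⟩ := exists_between hc
    filter_upwards [hlow c' hc', eventually_gt_atTop 0] with t h ht
    rw [lt_div_iff₀ ht]
    calc c * t < c' * t := by gcongr
      _ ≤ log (f t) := (le_log_iff_exp_le ((exp_pos _).trans_le h)).2 h
  · obtain ⟨c', hc', hc⟩ := exists_between hc
    filter_upwards [hlow (a - 1) (by linarith), hup c' hc', eventually_gt_atTop 0]
      with t hpos h ht
    rw [div_lt_iff₀ ht]
    calc log (f t) ≤ c' * t := (log_le_iff_le_exp ((exp_pos _).trans_le hpos)).2 h
      _ < c * t := by gcongr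

lemma tendsto_log_div_atTop_of_exp_le (hlow : ∀ c, ∀ᶠ t in atTop, exp (c * t) ≤ f t) :
    Tendsto (fun t => log (f t) / t) atTop atTop := by
  refine tendsto_atTop.2 fun c => ?_
  filter_upwards [hlow c, eventually_gt_atTop 0] with t h ht
  rw [le_div_iff₀ ht]
  exact (le_log_iff_exp_le ((exp_pos _).trans_le h)).2 h

lemma eventually_mul_le_mul_floor {c c' : ℝ} (h : c < c') :
    ∀ᶠ t in atTop, c * t ≤ c' * ⌊t⌋₊ := by
  have := (tendsto_nat_floor_div_atTop (R := ℝ)).const_mul c'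
  rw [mul_one] at this
  filter_upwards [this.eventually (eventually_gt_nhds h), eventually_gt_atTop 0] with t h ht
  rw [← mul_div_assoc, lt_div_iff₀ ht] at h
  exact h.le

lemma eventually_mul_ceil_le_mul {c c' : ℝ} (h : c' < c) :
    ∀ᶠ t in atTop, c' * ⌈t⌉₊ ≤ c * t := by
  have := (tendsto_nat_ceil_div_atTop (R := ℝ)).const_mul c'
  rw [mul_one] at this
  filter_upwards [this.eventually (eventually_lt_nhds h), eventually_gt_atTop 0] with t h ht
  rw [← mul_div_assoc, div_lt_iff₀ ht] at h
  exact h.le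

lemma eventually_exp_le_of_nat {g : ℝ → ℕ} (hg : ∀ ⦃s t⦄, 0 ≤ s → s ≤ t → g s ≤ g t)
    {c c' : ℝ} (hc : c < c') (h : ∀ᶠ m : ℕ in atTop, exp (c' * m) ≤ g m) :
    ∀ᶠ t in atTop, exp (c * t) ≤ g t := by
  filter_upwards [tendsto_nat_floor_atTop.eventually h, eventually_mul_le_mul_floor hc,
    eventually_ge_atTop 0] with t h1 h2 ht
  calc exp (c * t) ≤ exp (c' * ⌊t⌋₊) := exp_le_exp.2 h2
    _ ≤ g ⌊t⌋₊ := h1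
    _ ≤ g t := Nat.cast_le.2 (hg (Nat.cast_nonneg _) (Nat.floor_le ht))

lemma eventually_le_exp_of_nat {g : ℕ → ℝ → ℕ}
    (hg : ∀ n ⦃s t⦄, 0 ≤ s → s ≤ t → g n s ≤ g n t) {a c c' : ℝ} (ha : 0 ≤ a) (hc : c' < c)
    {k : ℕ} (h : ∀ᶠ m : ℕ in atTop, ∀ n < k * m, (g n (a * m) : ℝ) ≤ exp (c' * m)) :
    ∀ᶠ t in atTop, ∀ n : ℕ, (n : ℝ) < k * t → (g n (a * t) : ℝ) ≤ exp (c * t) := by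
  filter_upwards [tendsto_nat_ceil_atTop.eventually h, eventually_mul_ceil_le_mul hc,
    eventually_ge_atTop 0] with t h1 h2 ht n hn
  have hnk : (n : ℝ) < k * ⌈t⌉₊ := hn.trans_le (by gcongr; exact Nat.le_ceil t)
  calc (g n (a * t) : ℝ) ≤ g n (a * ⌈t⌉₊) :=
        Nat.cast_le.2 (hg n (by positivity) (by gcongr; exact Nat.le_ceil t))
    _ ≤ exp (c' * ⌈t⌉₊) := h1 n (by exact_mod_cast hnk)
    _ ≤ exp (c * t) := exp_le_exp.2 h2

end GrowthRate

section Realization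

variable {τ w : ℕ → ℝ} {y z : ℕ → ℝ → ℕ} {M : ℝ → ℕ} {N : ℝ → ℝ}

lemma le_iff_lt_tables (hτ_mono : Monotone τ) (hτ_top : Tendsto τ atTop atTop)
    (hM : ∀ t, M t = {n | τ n ≤ t}.ncard) (n : ℕ) (t : ℝ) : τ n ≤ t ↔ n < M t := by
  rw [hM]
  exact Set.ext_iff.1 (setOf_le_eq_Iio_ncard hτ_mono hτ_top t) n

lemma customers_eq_sum_range (hz : ∀ n t, z n t = if τ n ≤ t then y n (w n * (t - τ n)) else 0)
    (htables : ∀ n t, τ n ≤ t ↔ n < M t) (hN : ∀ t, N t = ∑' n, (z n t : ℝ)) (t : ℝ) :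
    N t = ∑ n ∈ Finset.range (M t), (z n t : ℝ) := by
  rw [hN t]
  refine tsum_eq_sum fun n hn => ?_
  rw [hz, if_neg (by rwa [htables, ← Finset.mem_range]), Nat.cast_zero]

lemma tendsto_tables_div {θ : ℝ} (hθ : 0 < θ) (hτ_mono : Monotone τ)
    (hτ_lim : Tendsto (fun n : ℕ => τ n / n) atTop (𝓝 θ⁻¹))
    (hM : ∀ t, M t = {n | τ n ≤ t}.ncard) : Tendsto (fun t => (M t : ℝ) / t) atTop (𝓝 θ) := by
  simpa only [hM, inv_inv] using tendsto_ncard_setOf_le_div hτ_mono (inv_pos.2 hθ) hτ_lim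

lemma eventually_exp_le_customers
    (hz : ∀ n t, z n t = if τ n ≤ t then y n (w n * (t - τ n)) else 0)
    (htables : ∀ n t, τ n ≤ t ↔ n < M t) (hN : ∀ t, N t = ∑ n ∈ Finset.range (M t), (z n t : ℝ))
    {n₀ : ℕ} (hw : 0 < w n₀) (hy : ∀ c < 1, ∀ᶠ s in atTop, exp (c * s) ≤ y n₀ s)
    {c : ℝ} (hc : c < w n₀) : ∀ᶠ t in atTop, exp (c * t) ≤ N t := by
  obtain ⟨c', hcc', hc'⟩ := exists_between ((div_lt_one hw).2 hc)
  have hs : Tendsto (fun t => w n₀ * (t - τ n₀)) atTop atTop :=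
    (tendsto_atTop_add_const_right _ _ tendsto_id).const_mul_atTop hw
  have hlin : ∀ᶠ t in atTop, c * t ≤ c' * (w n₀ * (t - τ n₀)) := by
    have hgap : 0 < c' * w n₀ - c := by rw [div_lt_iff₀ hw] at hcc'; linarith
    filter_upwards [(tendsto_id.const_mul_atTop hgap).eventually_ge_atTop (c' * w n₀ * τ n₀)]
      with t ht
    rw [id] at ht
    linarith
  filter_upwards [hs.eventually (hy c' hc'), hlin, eventually_ge_atTop (τ n₀)]
    with t hyt hct hτt
  calc exp (c * t) ≤ exp (c' * (w n₀ * (t - τ n₀))) := exp_le_exp.2 hct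
    _ ≤ z n₀ t := by rwa [hz, if_pos hτt]
    _ ≤ N t := by
      rw [hN]
      exact Finset.single_le_sum (fun n _ => Nat.cast_nonneg (z n t))
        (Finset.mem_range.2 ((htables _ _).1 hτt))

lemma table_le_yule (hz : ∀ n t, z n t = if τ n ≤ t then y n (w n * (t - τ n)) else 0)
    (hy_mono : ∀ n ⦃s t : ℝ⦄, 0 ≤ s → s ≤ t → y n s ≤ y n t) (hτ : ∀ n, 0 ≤ τ n)
    (hw : ∀ n, 0 ≤ w n) {a : ℝ} (hwa : ∀ n, w n ≤ a) {t : ℝ} (ht : 0 ≤ t) (n : ℕ) :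
    z n t ≤ y n (a * t) := by
  rw [hz]
  split_ifs with hτt
  · refine hy_mono n (mul_nonneg (hw n) (sub_nonneg.2 hτt)) ?_
    calc w n * (t - τ n) ≤ w n * t := by gcongr; exacts [hw n, by linarith [hτ n]]
      _ ≤ a * t := by gcongr; exact hwa n
  · exact Nat.zero_le _

lemma eventually_customers_le_exp (hN : ∀ t, N t = ∑ n ∈ Finset.range (M t), (z n t : ℝ))
    {a : ℝ} (htable : ∀ t, 0 ≤ t → ∀ n, z n t ≤ y n (a * t)) {k : ℕ}
    (hM : ∀ᶠ t in atTop, (M t : ℝ) ≤ k * t)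
    (hy : ∀ c > a, ∀ᶠ t in atTop, ∀ n : ℕ, (n : ℝ) < k * t → (y n (a * t) : ℝ) ≤ exp (c * t))
    {c : ℝ} (hc : a < c) : ∀ᶠ t in atTop, N t ≤ exp (c * t) := by
  obtain ⟨c', hac', hc'c⟩ := exists_between hc
  have hpoly : ∀ᶠ t in atTop, (k : ℝ) * t ≤ exp ((c - c') * t) := by
    filter_upwards [((isLittleO_pow_exp_pos_mul_atTop 1 (sub_pos.2 hc'c)).const_mul_left
      (k : ℝ)).eventuallyLE, eventually_ge_atTop 0] with t h ht
    simpa [abs_of_nonneg ht] using h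
  filter_upwards [hM, hy c' hac', hpoly, eventually_ge_atTop 0] with t hMt hyt hpt ht
  calc N t = ∑ n ∈ Finset.range (M t), (z n t : ℝ) := hN t
    _ ≤ ∑ n ∈ Finset.range (M t), exp (c' * t) := by
      refine Finset.sum_le_sum fun n hn => ?_
      exact (Nat.cast_le.2 (htable t ht n)).trans
        (hyt n ((Nat.cast_lt.2 (Finset.mem_range.1 hn)).trans_le hMt))
    _ = M t * exp (c' * t) := by rw [Finset.sum_const, Finset.card_range, nsmul_eq_mul]
    _ ≤ exp ((c - c') * t) * exp (c' * t) := by gcongr; exact hMt.trans hpt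
    _ = exp (c * t) := by rw [← exp_add]; ring_nf

lemma tendsto_tables_div_log_customers_of_bounded {θ a : ℝ} (hθ : 0 < θ) (ha : 0 < a)
    (hτ0 : τ 0 = 0) (hτ_mono : Monotone τ) (hτ_lim : Tendsto (fun n : ℕ => τ n / n) atTop (𝓝 θ⁻¹))
    (hw : ∀ n, 0 < w n) (hwa : ∀ n, w n ≤ a) (hw_sup : ∀ b < a, ∃ n, b < w n)
    (hy_mono : ∀ n ⦃s t : ℝ⦄, 0 ≤ s → s ≤ t → y n s ≤ y n t)
    (hy_low : ∀ n, ∀ c < 1, ∀ᶠ s in atTop, exp (c * s) ≤ y n s)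
    (hy_up : ∀ k : ℕ, ∀ c > a, ∀ᶠ t in atTop,
      ∀ n : ℕ, (n : ℝ) < k * t → (y n (a * t) : ℝ) ≤ exp (c * t))
    (hz : ∀ n t, z n t = if τ n ≤ t then y n (w n * (t - τ n)) else 0)
    (hM : ∀ t, M t = {n | τ n ≤ t}.ncard) (hN : ∀ t, N t = ∑' n, (z n t : ℝ)) :
    Tendsto (fun t => (M t : ℝ) / log (N t)) atTop (𝓝 (θ / a)) := by
  have htables := le_iff_lt_tables hτ_mono (tendsto_atTop_of_tendsto_div (inv_pos.2 hθ) hτ_lim) hM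
  have hNsum := customers_eq_sum_range hz htables hN
  have hMlim := tendsto_tables_div hθ hτ_mono hτ_lim hM
  obtain ⟨k, hk⟩ := exists_nat_gt θ
  have hMk : ∀ᶠ t in atTop, (M t : ℝ) ≤ k * t := by
    filter_upwards [hMlim.eventually (eventually_lt_nhds hk), eventually_gt_atTop 0] with t h ht
    exact ((div_lt_iff₀ ht).1 h).le
  have htable t (ht : 0 ≤ t) :=
    table_le_yule hz hy_mono (fun n => hτ0 ▸ hτ_mono n.zero_le) (fun n => (hw n).le) hwa ht
  have hlogN : Tendsto (fun t => log (N t) / t) atTop (𝓝 a) := by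
    refine tendsto_log_div_of_exp_bounds (fun c hc => ?_)
      fun c hc => eventually_customers_le_exp hNsum htable hMk (hy_up k) hc
    obtain ⟨n, hn⟩ := hw_sup c hc
    exact eventually_exp_le_customers hz htables hNsum (hw n) (hy_low n) hn
  refine (hMlim.div hlogN ha.ne').congr' ?_
  filter_upwards [eventually_ne_atTop 0] with t ht using div_div_div_cancel_right₀ ht _ _

lemma tendsto_tables_div_log_customers_of_unbounded {θ : ℝ} (hθ : 0 < θ)
    (hτ_mono : Monotone τ) (hτ_lim : Tendsto (fun n : ℕ => τ n / n) atTop (𝓝 θ⁻¹))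
    (hw : ∀ n, 0 < w n) (hw_sup : ∀ b, ∃ n, b < w n)
    (hy_low : ∀ n, ∀ c < 1, ∀ᶠ s in atTop, exp (c * s) ≤ y n s)
    (hz : ∀ n t, z n t = if τ n ≤ t then y n (w n * (t - τ n)) else 0)
    (hM : ∀ t, M t = {n | τ n ≤ t}.ncard) (hN : ∀ t, N t = ∑' n, (z n t : ℝ)) :
    Tendsto (fun t => (M t : ℝ) / log (N t)) atTop (𝓝 0) := by
  have htables := le_iff_lt_tables hτ_mono (tendsto_atTop_of_tendsto_div (inv_pos.2 hθ) hτ_lim) hM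
  have hlogN : Tendsto (fun t => log (N t) / t) atTop atTop := by
    refine tendsto_log_div_atTop_of_exp_le fun c => ?_
    obtain ⟨n, hn⟩ := hw_sup c
    exact eventually_exp_le_customers hz htables (customers_eq_sum_range hz htables hN) (hw n)
      (hy_low n) hn
  refine ((tendsto_tables_div hθ hτ_mono hτ_lim hM).div_atTop hlogN).congr' ?_
  filter_upwards [eventually_ne_atTop 0] with t ht using div_div_div_cancel_right₀ ht _ _

end Realization

section Geometric

variable {Ω : Type*} [MeasurableSpace Ω] {P : Measure Ω} {X : Ω → ℕ} {p : ℝ}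

lemma measure_lt_geometric_le (hp0 : 0 < p) (hp1 : p ≤ 1)
    (hX : ∀ k, 1 ≤ k → P {ω | X ω = k} = ENNReal.ofReal (p * (1 - p) ^ (k - 1))) (K : ℕ) :
    P {ω | K < X ω} ≤ ENNReal.ofReal ((1 - p) ^ K) := by
  have hq0 : 0 ≤ 1 - p := sub_nonneg.2 hp1
  have hq1 : 1 - p < 1 := by linarith
  calc P {ω | K < X ω} ≤ P (⋃ j : ℕ, {ω | X ω = K + 1 + j}) :=
        measure_mono fun ω hω => Set.mem_iUnion.2 ⟨X ω - (K + 1), by simp at hω ⊢; omega⟩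
    _ ≤ ∑' j : ℕ, P {ω | X ω = K + 1 + j} := measure_iUnion_le _
    _ = ∑' j : ℕ, ENNReal.ofReal (p * (1 - p) ^ K * (1 - p) ^ j) := by
        refine tsum_congr fun j => ?_
        rw [hX _ (by omega), show K + 1 + j - 1 = K + j by omega, pow_add, mul_assoc]
    _ = ENNReal.ofReal (∑' j : ℕ, p * (1 - p) ^ K * (1 - p) ^ j) :=
        (ENNReal.ofReal_tsum_of_nonneg (fun j => by positivity)
          ((summable_geometric_of_lt_one hq0 hq1).mul_left _)).symm
    _ = ENNReal.ofReal ((1 - p) ^ K) := by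
        rw [tsum_mul_left, tsum_geometric_of_lt_one hq0 hq1, sub_sub_cancel]
        field_simp

lemma measure_le_geometric_le (hp0 : 0 ≤ p) (hp1 : p ≤ 1) (hX1 : ∀ ω, 1 ≤ X ω)
    (hX : ∀ k, 1 ≤ k → P {ω | X ω = k} = ENNReal.ofReal (p * (1 - p) ^ (k - 1))) (K : ℕ) :
    P {ω | X ω ≤ K} ≤ K * ENNReal.ofReal p := by
  calc P {ω | X ω ≤ K} ≤ P (⋃ k ∈ Finset.Icc 1 K, {ω | X ω = k}) :=
        measure_mono fun ω hω => Set.mem_biUnion (Finset.mem_Icc.2 ⟨hX1 ω, hω⟩) rfl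
    _ ≤ ∑ k ∈ Finset.Icc 1 K, P {ω | X ω = k} := measure_biUnion_finset_le _ _
    _ ≤ ∑ k ∈ Finset.Icc 1 K, ENNReal.ofReal p := by
        refine Finset.sum_le_sum fun k hk => ?_
        rw [hX k (Finset.mem_Icc.1 hk).1]
        exact ENNReal.ofReal_le_ofReal
          (mul_le_of_le_one_right hp0 (pow_le_one₀ (sub_nonneg.2 hp1) (by linarith)))
    _ = K * ENNReal.ofReal p := by simp

end Geometric

lemma one_sub_exp_neg_pow_floor_le {a c m : ℝ} (ha : 0 ≤ a) (hm : 0 ≤ m) :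
    (1 - exp (-(a * m))) ^ ⌊exp (c * m)⌋₊ ≤ exp (-((c - a) * m)) := by
  set x := exp (-(a * m))
  have hx0 : 0 < x := exp_pos _
  have hx1 : x ≤ 1 := exp_le_one_iff.2 (by nlinarith)
  -- `⌊e^{cm}⌋ x ≥ (e^{cm} - 1) x = e^{(c-a)m} - x ≥ (c - a) m`
  have hfloor : exp (c * m) - 1 ≤ ⌊exp (c * m)⌋₊ := (Nat.sub_one_lt_floor _).le
  have hmul : exp (c * m) * x = exp ((c - a) * m) := by rw [← exp_add]; ring_nf
  have hlin := add_one_le_exp ((c - a) * m)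
  calc (1 - x) ^ ⌊exp (c * m)⌋₊ ≤ exp (-x) ^ ⌊exp (c * m)⌋₊ :=
        pow_le_pow_left₀ (sub_nonneg.2 hx1) (one_sub_le_exp_neg x) _
    _ = exp (-(⌊exp (c * m)⌋₊ * x)) := by rw [← exp_nat_mul]; ring_nf
    _ ≤ exp (-((c - a) * m)) := exp_le_exp.2 (by nlinarith)

section Yule

variable {Ω : Type*} [MeasurableSpace Ω] {P : Measure Ω}

lemma ae_eventually_notMem_of_summable {s : ℕ → Set Ω} {g : ℕ → ℝ} (hg0 : ∀ m, 0 ≤ g m)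
    (hg : Summable g) (h : ∀ m, P (s m) ≤ ENNReal.ofReal (g m)) :
    ∀ᵐ ω ∂P, ∀ᶠ m in atTop, ω ∉ s m := by
  refine ae_eventually_notMem (ne_top_of_le_ne_top ?_ (ENNReal.tsum_le_tsum h))
  rw [← ENNReal.ofReal_tsum_of_nonneg hg0 hg]
  exact ENNReal.ofReal_ne_top

lemma ae_eventually_exp_le_yule {X : ℝ → Ω → ℕ} (hX1 : ∀ t, 0 ≤ t → ∀ ω, 1 ≤ X t ω)
    (hlaw : ∀ t, 0 ≤ t → ∀ k, 1 ≤ k →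
      P {ω | X t ω = k} = ENNReal.ofReal (exp (-t) * (1 - exp (-t)) ^ (k - 1)))
    {c : ℝ} (hc : c < 1) : ∀ᵐ ω ∂P, ∀ᶠ m : ℕ in atTop, exp (c * m) ≤ X m ω := by
  have hsum := summable_pow_mul_exp_neg_nat_mul 0 (sub_pos.2 hc)
  refine (ae_eventually_notMem_of_summable (s := fun m : ℕ => {ω | X m ω ≤ ⌊exp (c * m)⌋₊})
    (fun m => by positivity) hsum fun m => ?_).mono fun ω hω => hω.mono fun m hm => ?_
  · have hm := m.cast_nonneg (α := ℝ)
    calc P {ω | X m ω ≤ ⌊exp (c * m)⌋₊}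
        ≤ ⌊exp (c * m)⌋₊ * ENNReal.ofReal (exp (-m)) :=
          measure_le_geometric_le (exp_pos _).le (exp_le_one_iff.2 (by linarith))
            (hX1 m hm) (hlaw m hm) _
      _ ≤ ENNReal.ofReal (exp (c * m) * exp (-m)) := by
          rw [ENNReal.ofReal_mul (exp_pos _).le, ← ENNReal.ofReal_natCast]
          gcongr
          exact Nat.floor_le (exp_pos _).le
      _ = ENNReal.ofReal ((m : ℝ) ^ 0 * exp (-(1 - c) * m)) := by rw [← exp_add]; ring_nf
  · exact ((Nat.floor_lt (exp_pos _).le).1 (not_le.1 hm)).le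

lemma ae_eventually_yule_le_exp {X : ℕ → ℝ → Ω → ℕ}
    (hlaw : ∀ n t, 0 ≤ t → ∀ k, 1 ≤ k →
      P {ω | X n t ω = k} = ENNReal.ofReal (exp (-t) * (1 - exp (-t)) ^ (k - 1)))
    {a c : ℝ} (ha : 0 ≤ a) (hac : a < c) (k : ℕ) :
    ∀ᵐ ω ∂P, ∀ᶠ m : ℕ in atTop, ∀ n < k * m, (X n (a * m) ω : ℝ) ≤ exp (c * m) := by
  have hsum := (summable_pow_mul_exp_neg_nat_mul 1 (sub_pos.2 hac)).mul_left (k : ℝ)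
  refine (ae_eventually_notMem_of_summable
    (s := fun m : ℕ => ⋃ n ∈ Finset.range (k * m), {ω | exp (c * m) < X n (a * m) ω})
    (fun m => by positivity) hsum fun m => ?_).mono fun ω hω => hω.mono fun m hm n hn => ?_
  · have ham : 0 ≤ a * m := by positivity
    have hp1 : exp (-(a * m)) ≤ 1 := exp_le_one_iff.2 (by linarith)
    have htail (n : ℕ) : P {ω | exp (c * m) < X n (a * m) ω} ≤
        ENNReal.ofReal (exp (-((c - a) * m))) := by
      simp_rw [← Nat.floor_lt (exp_pos _).le]
      exact (measure_lt_geometric_le (exp_pos _) hp1 (hlaw n _ ham) _).trans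
        (ENNReal.ofReal_le_ofReal (one_sub_exp_neg_pow_floor_le ha m.cast_nonneg))
    calc P (⋃ n ∈ Finset.range (k * m), {ω | exp (c * m) < X n (a * m) ω})
        ≤ ∑ n ∈ Finset.range (k * m), P {ω | exp (c * m) < X n (a * m) ω} :=
          measure_biUnion_finset_le _ _
      _ ≤ ∑ n ∈ Finset.range (k * m), ENNReal.ofReal (exp (-((c - a) * m))) :=
          Finset.sum_le_sum fun n _ => htail n
      _ = ENNReal.ofReal (k * ((m : ℝ) ^ 1 * exp (-(c - a) * m))) := by
          rw [Finset.sum_const, Finset.card_range, nsmul_eq_mul, ← ENNReal.ofReal_natCast,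
            ← ENNReal.ofReal_mul (by positivity)]
          push_cast
          ring_nf
  · exact not_lt.1 fun h => hm (Set.mem_biUnion (Finset.mem_range.2 hn) h)

lemma ae_forall_eventually_exp_le_yule {X : ℝ → Ω → ℕ}
    (hX_mono : ∀ ω ⦃s t : ℝ⦄, 0 ≤ s → s ≤ t → X s ω ≤ X t ω)
    (hX1 : ∀ t, 0 ≤ t → ∀ ω, 1 ≤ X t ω)
    (hlaw : ∀ t, 0 ≤ t → ∀ k, 1 ≤ k →
      P {ω | X t ω = k} = ENNReal.ofReal (exp (-t) * (1 - exp (-t)) ^ (k - 1))) :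
    ∀ᵐ ω ∂P, ∀ c < 1, ∀ᶠ t in atTop, exp (c * t) ≤ X t ω := by
  filter_upwards [ae_all_iff.2 fun q : {q : ℚ // (q : ℝ) < 1} =>
    ae_eventually_exp_le_yule hX1 hlaw q.2] with ω h c hc
  obtain ⟨q, hcq, hq⟩ := exists_rat_btwn hc
  exact eventually_exp_le_of_nat (hX_mono ω) hcq (h ⟨q, hq⟩)

lemma ae_forall_eventually_yule_le_exp {X : ℕ → ℝ → Ω → ℕ}
    (hX_mono : ∀ n ω ⦃s t : ℝ⦄, 0 ≤ s → s ≤ t → X n s ω ≤ X n t ω)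
    (hlaw : ∀ n t, 0 ≤ t → ∀ k, 1 ≤ k →
      P {ω | X n t ω = k} = ENNReal.ofReal (exp (-t) * (1 - exp (-t)) ^ (k - 1)))
    {a : ℝ} (ha : 0 ≤ a) :
    ∀ᵐ ω ∂P, ∀ k : ℕ, ∀ c > a, ∀ᶠ t in atTop,
      ∀ n : ℕ, (n : ℝ) < k * t → (X n (a * t) ω : ℝ) ≤ exp (c * t) := by
  filter_upwards [ae_all_iff.2 fun k : ℕ => ae_all_iff.2 fun q : {q : ℚ // a < q} =>
    ae_eventually_yule_le_exp hlaw ha q.2 k] with ω h k c hc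
  obtain ⟨q, haq, hqc⟩ := exists_rat_btwn hc
  exact eventually_le_exp_of_nat (fun n => hX_mono n ω) ha hqc (h k ⟨q, haq⟩)

end Yule

section Weights

variable {Ω : Type*} [MeasurableSpace Ω] {P : Measure Ω} {X : ℕ → Ω → ℝ} {ν : Measure ℝ}

lemma ae_forall_of_ae_map (hX : ∀ n, Measurable (X n)) (hlaw : ∀ n, P.map (X n) = ν)
    {p : ℝ → Prop} (hp : ∀ᵐ x ∂ν, p x) : ∀ᵐ ω ∂P, ∀ n, p (X n ω) :=
  ae_all_iff.2 fun n => ae_of_ae_map (hX n).aemeasurable (by rwa [hlaw n])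

variable [IsProbabilityMeasure ν]

lemma ae_exists_mem_of_iIndepFun (hindep : iIndepFun X P) (hX : ∀ n, Measurable (X n))
    (hlaw : ∀ n, P.map (X n) = ν) {s : Set ℝ} (hs : MeasurableSet s) (hνs : ν s ≠ 0) :
    ∀ᵐ ω ∂P, ∃ n, X n ω ∈ s := by
  have hlt : ν sᶜ < 1 := by
    rw [prob_compl_eq_one_sub hs]
    exact ENNReal.sub_lt_self ENNReal.one_ne_top one_ne_zero hνs
  have hmiss (n : ℕ) : P (X n ⁻¹' sᶜ) = ν sᶜ := by rw [← Measure.map_apply (hX n) hs.compl, hlaw]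
  have hprod (K : ℕ) : P (⋂ n ∈ Finset.range K, X n ⁻¹' sᶜ) = ν sᶜ ^ K := by
    rw [hindep.measure_inter_preimage_eq_mul _ fun _ _ => hs.compl]
    simp only [Finset.prod_congr rfl fun n _ => hmiss n, Finset.prod_const, Finset.card_range]
  rw [ae_iff]
  refine le_antisymm (ge_of_tendsto' (ENNReal.tendsto_pow_atTop_nhds_zero_of_lt_one hlt)
    fun K => ?_) zero_le
  rw [← hprod K]
  exact measure_mono fun ω hω => by simp_all

lemma ae_forall_lt_exists_lt (hindep : iIndepFun X P) (hX : ∀ n, Measurable (X n))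
    (hlaw : ∀ n, P.map (X n) = ν) {a : ℝ} (ha : ∀ b < a, 0 < ν (Set.Ioi b)) :
    ∀ᵐ ω ∂P, ∀ b < a, ∃ n, b < X n ω := by
  filter_upwards [ae_all_iff.2 fun q : {q : ℚ // (q : ℝ) < a} =>
    ae_exists_mem_of_iIndepFun hindep hX hlaw measurableSet_Ioi (ha q q.2).ne'] with ω h b hb
  obtain ⟨q, hbq, hqa⟩ := exists_rat_btwn hb
  obtain ⟨n, hn⟩ := h ⟨q, hqa⟩
  exact ⟨n, hbq.trans hn⟩

lemma ae_forall_exists_lt (hindep : iIndepFun X P) (hX : ∀ n, Measurable (X n))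
    (hlaw : ∀ n, P.map (X n) = ν) (hν : ∀ b, 0 < ν (Set.Ioi b)) :
    ∀ᵐ ω ∂P, ∀ b, ∃ n, b < X n ω := by
  filter_upwards [ae_all_iff.2 fun q : ℚ =>
    ae_exists_mem_of_iIndepFun hindep hX hlaw measurableSet_Ioi (hν q).ne'] with ω h b
  obtain ⟨q, hbq⟩ := exists_rat_gt b
  obtain ⟨n, hn⟩ := h q
  exact ⟨n, hbq.trans hn⟩

end Weights

lemma pos_of_measure_Ioi_eq_zero {μ : Measure ℝ} [IsProbabilityMeasure μ]
    (hμ : μ (Set.Iic 0) = 0) {a : ℝ} (ha : μ (Set.Ioi a) = 0) : 0 < a := by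
  by_contra! ha'
  have h1 : μ (Set.Ioi 0) = 1 := by
    rw [← Set.compl_Iic, prob_compl_eq_one_sub measurableSet_Iic, hμ, tsub_zero]
  simpa [h1, ha] using measure_mono (μ := μ) (Set.Ioi_subset_Ioi ha')

section Exponential

variable {Ω : Type*} [MeasurableSpace Ω] {P : Measure Ω} [IsProbabilityMeasure P]
  {X : Ω → ℝ} {θ : ℝ}

lemma measure_lt_eq_of_exp_tail
    (htail : ∀ x, 0 ≤ x → P {ω | x < X ω} = ENNReal.ofReal (exp (-θ * x))) (x : ℝ) :
    P {ω | x < X ω} = ENNReal.ofReal (exp (-θ * max x 0)) := by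
  rcases le_total 0 x with hx | hx
  · rw [max_eq_left hx, htail x hx]
  · have h0 := htail 0 le_rfl
    rw [mul_zero, exp_zero, ENNReal.ofReal_one] at h0
    rw [max_eq_right hx, mul_zero, exp_zero, ENNReal.ofReal_one]
    exact le_antisymm prob_le_one (h0 ▸ measure_mono fun ω (hω : 0 < X ω) => hx.trans_lt hω)

lemma identDistrib_of_exp_tail {X' : Ω → ℝ} (hX : Measurable X) (hX' : Measurable X')
    (htail : ∀ x, 0 ≤ x → P {ω | x < X ω} = ENNReal.ofReal (exp (-θ * x)))
    (htail' : ∀ x, 0 ≤ x → P {ω | x < X' ω} = ENNReal.ofReal (exp (-θ * x))) :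
    IdentDistrib X X' P P := by
  refine ⟨hX.aemeasurable, hX'.aemeasurable, Measure.ext_of_Iic _ _ fun x => ?_⟩
  have hcdf {Y : Ω → ℝ} (hY : Measurable Y) : P.map Y (Set.Iic x) = 1 - P {ω | x < Y ω} := by
    rw [Measure.map_apply hY measurableSet_Iic,
      ← prob_compl_eq_one_sub (measurableSet_lt measurable_const hY)]
    congr 1
    ext ω
    simp
  rw [hcdf hX, hcdf hX', measure_lt_eq_of_exp_tail htail, measure_lt_eq_of_exp_tail htail']

lemma ae_pos_of_exp_tail (hX : Measurable X)
    (htail : ∀ x, 0 ≤ x → P {ω | x < X ω} = ENNReal.ofReal (exp (-θ * x))) :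
    ∀ᵐ ω ∂P, 0 < X ω := by
  refine (ae_iff_measure_eq (measurableSet_lt measurable_const hX).nullMeasurableSet).2 ?_
  rw [htail 0 le_rfl, mul_zero, exp_zero, ENNReal.ofReal_one, measure_univ]

lemma lintegral_ofReal_of_exp_tail (hθ : 0 < θ) (hX : Measurable X)
    (htail : ∀ x, 0 ≤ x → P {ω | x < X ω} = ENNReal.ofReal (exp (-θ * x))) :
    ∫⁻ ω, ENNReal.ofReal (X ω) ∂P = ENNReal.ofReal θ⁻¹ := by
  have hθ' : -θ < 0 := neg_neg_of_pos hθ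
  rw [lintegral_eq_lintegral_meas_lt P ((ae_pos_of_exp_tail hX htail).mono fun _ h => h.le)
      hX.aemeasurable,
    setLIntegral_congr_fun measurableSet_Ioi fun t ht => htail t (le_of_lt ht),
    ← ofReal_integral_eq_lintegral_ofReal (integrableOn_exp_mul_Ioi hθ' 0)
      (ae_of_all _ fun t => (exp_pos _).le),
    integral_exp_mul_Ioi hθ' 0]
  rw [mul_zero, exp_zero, neg_div_neg_eq, one_div]

lemma ae_tendsto_sum_range_div_of_exp_tail {E : ℕ → Ω → ℝ} (hθ : 0 < θ)
    (hindep : iIndepFun E P) (hE : ∀ n, Measurable (E n))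
    (htail : ∀ n, ∀ x, 0 ≤ x → P {ω | x < E n ω} = ENNReal.ofReal (exp (-θ * x))) :
    ∀ᵐ ω ∂P, Tendsto (fun n : ℕ => (∑ i ∈ Finset.range n, E i ω) / n) atTop (𝓝 θ⁻¹) := by
  have hlint := lintegral_ofReal_of_exp_tail hθ (hE 0) (htail 0)
  have hnonneg : 0 ≤ᵐ[P] E 0 := (ae_pos_of_exp_tail (hE 0) (htail 0)).mono fun _ h => h.le
  have hint : Integrable (E 0) P := ⟨(hE 0).aestronglyMeasurable, by
    rw [hasFiniteIntegral_iff_ofReal hnonneg, hlint]; exact ENNReal.ofReal_lt_top⟩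
  have hmean : ∫ ω, E 0 ω ∂P = θ⁻¹ := by
    rw [integral_eq_lintegral_of_nonneg_ae hnonneg (hE 0).aestronglyMeasurable, hlint,
      ENNReal.toReal_ofReal (inv_nonneg.2 hθ.le)]
  simpa only [hmean] using strong_law_ae_real E hint (fun i j hij => hindep.indepFun hij)
    fun n => identDistrib_of_exp_tail (hE n) (hE 0) (htail n) (htail 0)

end Exponential

/-- Continuous-time disordered Chinese restaurant process: tables are created at the
partial sums `τ_n` of i.i.d. rate-`θ` exponentials (so table `0` is created at time `0`),
table `n` carries weight `W_n` i.i.d. with law `μ` on `(0,∞)`, and its size is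
`Z_n(t) = Y_n(W_n (t - τ_n)) 1_{t ≥ τ_n}` for i.i.d. rate-1 Yule processes `Y_n`,
all families jointly independent. With `M(t)` the number of occupied tables and
`N(t) = Σ_n Z_n(t)`: if `essup μ = a < ∞` and `μ{a} = 0` then
`M(t)/log N(t) → θ/a` a.s.; if `essup μ = ∞` then `M(t)/log N(t) → 0` a.s. -/
theorem crp_number_of_tables_vs_log_customers
    {Ω : Type*} [MeasurableSpace Ω] (P : Measure Ω) [IsProbabilityMeasure P]
    (θ : ℝ) (hθ : 0 < θ)
    (μ : Measure ℝ) [IsProbabilityMeasure μ] (hμsupp : μ (Set.Iic 0) = 0)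
    (W : ℕ → Ω → ℝ) (hWmeas : ∀ n, Measurable (W n))
    (hWlaw : ∀ n, Measure.map (W n) P = μ)
    (E : ℕ → Ω → ℝ) (hEmeas : ∀ n, Measurable (E n))
    (hElaw : ∀ n, ∀ x : ℝ, 0 ≤ x → P {ω | x < E n ω} = ENNReal.ofReal (Real.exp (-θ * x)))
    (τ : ℕ → Ω → ℝ) (hτ : ∀ n ω, τ n ω = ∑ i ∈ Finset.range n, E i ω)
    (Y : ℕ → ℝ → Ω → ℕ)
    (hY0 : ∀ n ω, Y n 0 ω = 1)
    (hYmono : ∀ n ω ⦃s t : ℝ⦄, 0 ≤ s → s ≤ t → Y n s ω ≤ Y n t ω)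
    (hYlaw : ∀ n, ∀ t : ℝ, 0 ≤ t → ∀ k : ℕ, 1 ≤ k →
      P {ω | Y n t ω = k} =
        ENNReal.ofReal (Real.exp (-t) * (1 - Real.exp (-t)) ^ (k - 1)))
    (hindep : iIndep (fun i : ℕ ⊕ ℕ ⊕ ℕ =>
      Sum.elim (fun n => MeasurableSpace.comap (W n) inferInstance)
        (Sum.elim (fun n => MeasurableSpace.comap (E n) inferInstance)
          (fun n => MeasurableSpace.comap (fun ω s => Y n s ω) inferInstance)) i) P)
    (Z : ℕ → ℝ → Ω → ℕ)
    (hZ : ∀ n t ω, Z n t ω = if τ n ω ≤ t then Y n (W n ω * (t - τ n ω)) ω else 0)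
    (Mt : ℝ → Ω → ℕ) (hM : ∀ t ω, Mt t ω = Set.ncard {n : ℕ | τ n ω ≤ t})
    (Nt : ℝ → Ω → ℝ) (hN : ∀ t ω, Nt t ω = ∑' n, (Z n t ω : ℝ)) :
    (∀ a : ℝ, μ (Set.Ioi a) = 0 → (∀ b : ℝ, b < a → 0 < μ (Set.Ioi b)) → μ {a} = 0 →
      ∀ᵐ ω ∂P, Tendsto (fun t => (Mt t ω : ℝ) / Real.log (Nt t ω)) atTop (nhds (θ / a))) ∧
    ((∀ b : ℝ, 0 < μ (Set.Ioi b)) →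
      ∀ᵐ ω ∂P, Tendsto (fun t => (Mt t ω : ℝ) / Real.log (Nt t ω)) atTop (nhds 0)) := by
  have hW_indep : iIndepFun W P := hindep.precomp Sum.inl_injective
  have hE_indep : iIndepFun E P := hindep.precomp (Sum.inr_injective.comp Sum.inl_injective)
  have hτ_lim : ∀ᵐ ω ∂P, Tendsto (fun n : ℕ => τ n ω / n) atTop (𝓝 θ⁻¹) := by
    simpa only [hτ] using ae_tendsto_sum_range_div_of_exp_tail hθ hE_indep hEmeas hElaw
  have hτ_mono : ∀ᵐ ω ∂P, Monotone (τ · ω) := by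
    filter_upwards [ae_all_iff.2 fun n => ae_pos_of_exp_tail (hEmeas n) (hElaw n)] with ω hE
    refine monotone_nat_of_le_succ fun n => ?_
    simp only [hτ, Finset.sum_range_succ, le_add_iff_nonneg_right, (hE n).le]
  have hτ0 (ω : Ω) : τ 0 ω = 0 := by simp [hτ]
  have hW_pos : ∀ᵐ ω ∂P, ∀ n, 0 < W n ω := ae_forall_of_ae_map hWmeas hWlaw
    ((measure_eq_zero_iff_ae_notMem.1 hμsupp).mono fun _ => Set.notMem_Iic.1)
  have hY_low : ∀ᵐ ω ∂P, ∀ n, ∀ c < 1, ∀ᶠ s in atTop, exp (c * s) ≤ Y n s ω :=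
    ae_all_iff.2 fun n => ae_forall_eventually_exp_le_yule (hYmono n)
      (fun t ht ω => hY0 n ω ▸ hYmono n ω le_rfl ht) (hYlaw n)
  refine ⟨fun a hIoi hsup _ => ?_, fun hsup => ?_⟩
  · have ha := pos_of_measure_Ioi_eq_zero hμsupp hIoi
    have hW_le : ∀ᵐ ω ∂P, ∀ n, W n ω ≤ a := ae_forall_of_ae_map hWmeas hWlaw
      ((measure_eq_zero_iff_ae_notMem.1 hIoi).mono fun _ => Set.notMem_Ioi.1)
    filter_upwards [hτ_lim, hτ_mono, hW_pos, hW_le, hY_low,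
      ae_forall_lt_exists_lt hW_indep hWmeas hWlaw hsup,
      ae_forall_eventually_yule_le_exp hYmono hYlaw ha.le] with ω hlim hmono hpos hle hlow hsup hup
    exact tendsto_tables_div_log_customers_of_bounded hθ ha (hτ0 ω) hmono hlim hpos hle hsup
      (hYmono · ω) hlow hup (hZ · · ω) (hM · ω) (hN · ω)
  · filter_upwards [hτ_lim, hτ_mono, hW_pos, hY_low,
      ae_forall_exists_lt hW_indep hWmeas hWlaw hsup] with ω hlim hmono hpos hlow hsup
    exact tendsto_tables_div_log_customers_of_unbounded hθ hmono hlim hpos hsup hlow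
      (hZ · · ω) (hM · ω) (hN · ω)
end

section
/- In the continuous-time disordered Chinese restaurant process with weight distribution μ having no atom at its essential supremum, for every fixed table index i, Z_i(t) → ∞ and Z_i(t)/N(t) → 0 almost surely as t→∞, where N(t) is the total number of customers. In particular no fixed table has macroscopic occupancy. -/
/-!
A Yule marginal `Y(s)` is geometric with parameter `e^{-s}`, so Borel–Cantelli along integer
times, together with monotonicity in `s`, gives `log Y(s) / s → 1` almost surely; hence
`log Z_n(t) / t → W_n`. Since `μ` has no atom at its essential supremum, almost surely `W_i` lies
below some rational `r` with `μ (r, ∞) > 0`, and by independence some other `W_j` exceeds `r`.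
Then `Z_i(t) / N(t) ≤ Z_i(t) / Z_j(t) = exp (t (log Z_i(t) / t - log Z_j(t) / t)) → 0`, where
`N(t)` is a finite sum because the exponential gaps make `τ_n → ∞`.
-/

open MeasureTheory ProbabilityTheory Filter Real Set Topology
open scoped ENNReal

lemma tendsto_div_of_monotoneOn_of_tendsto_nat {g : ℝ → ℝ} {c : ℝ} (hg : MonotoneOn g (Ici 0))
    (h : Tendsto (fun n : ℕ => g n / n) atTop (𝓝 c)) :
    Tendsto (fun s => g s / s) atTop (𝓝 c) := by
  have hlow : Tendsto (fun s : ℝ => g ⌊s⌋₊ / ⌊s⌋₊ * (⌊s⌋₊ / s)) atTop (𝓝 c) := by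
    simpa using (h.comp tendsto_nat_floor_atTop).mul tendsto_nat_floor_div_atTop
  have hup : Tendsto (fun s : ℝ => g ⌈s⌉₊ / ⌈s⌉₊ * (⌈s⌉₊ / s)) atTop (𝓝 c) := by
    simpa using (h.comp tendsto_nat_ceil_atTop).mul tendsto_nat_ceil_div_atTop
  refine tendsto_of_tendsto_of_tendsto_of_le_of_le' hlow hup ?_ ?_
  · filter_upwards [eventually_ge_atTop 1] with s hs
    have hfloor : (0 : ℝ) < ⌊s⌋₊ := by exact_mod_cast Nat.floor_pos.2 hs
    rw [div_mul_div_cancel₀ hfloor.ne']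
    exact div_le_div_of_nonneg_right
      (hg hfloor.le (mem_Ici.2 (by linarith)) (Nat.floor_le (by linarith))) (by linarith)
  · filter_upwards [eventually_ge_atTop 1] with s hs
    have hceil : (0 : ℝ) < ⌈s⌉₊ := by exact_mod_cast Nat.ceil_pos.2 (by linarith)
    rw [div_mul_div_cancel₀ hceil.ne']
    exact div_le_div_of_nonneg_right (hg (mem_Ici.2 (by linarith)) hceil.le (Nat.le_ceil s))
      (by linarith)

lemma tendsto_log_comp_affine_div {f : ℝ → ℝ} {w : ℝ} (a : ℝ) (hw : 0 < w)
    (hf : Tendsto (fun s => log (f s) / s) atTop (𝓝 1)) :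
    Tendsto (fun t => log (f (w * (t - a))) / t) atTop (𝓝 w) := by
  have hs : Tendsto (fun t => w * (t - a)) atTop atTop :=
    (tendsto_atTop_add_const_right _ (-a) tendsto_id).const_mul_atTop hw
  have hratio : Tendsto (fun t => w * (t - a) / t) atTop (𝓝 w) := by
    have h : Tendsto (fun t : ℝ => w - w * a * t⁻¹) atTop (𝓝 w) := by
      simpa using tendsto_const_nhds (x := w).sub (tendsto_inv_atTop_zero.const_mul (w * a))
    refine h.congr' ?_
    filter_upwards [eventually_gt_atTop 0] with t ht
    field_simp
  have h : Tendsto (fun t => log (f (w * (t - a))) / (w * (t - a)) * (w * (t - a) / t)) atTop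
      (𝓝 w) := by
    simpa using (hf.comp hs).mul hratio
  refine h.congr' ?_
  filter_upwards [hs.eventually_gt_atTop 0] with t ht
  exact div_mul_div_cancel₀ ht.ne'

lemma tendsto_atTop_of_tendsto_log_div {f : ℝ → ℝ} {a : ℝ} (ha : 0 < a)
    (hf0 : ∀ᶠ t in atTop, 0 ≤ f t) (hf : Tendsto (fun t => log (f t) / t) atTop (𝓝 a)) :
    Tendsto f atTop atTop := by
  refine tendsto_atTop_mono' atTop ?_ (tendsto_id.atTop_mul_pos ha hf)
  filter_upwards [hf0, eventually_gt_atTop 0] with t hft ht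
  rw [id, mul_div_cancel₀ _ ht.ne']
  exact log_le_self hft

lemma tendsto_div_zero_of_tendsto_log_div {f g : ℝ → ℝ} {a b : ℝ} (hab : a < b)
    (hf0 : ∀ᶠ t in atTop, 0 < f t) (hg0 : ∀ᶠ t in atTop, 0 < g t)
    (hf : Tendsto (fun t => log (f t) / t) atTop (𝓝 a))
    (hg : Tendsto (fun t => log (g t) / t) atTop (𝓝 b)) :
    Tendsto (fun t => f t / g t) atTop (𝓝 0) := by
  have hexp := tendsto_exp_atBot.comp (tendsto_id.atTop_mul_neg (sub_neg.2 hab) (hf.sub hg))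
  refine hexp.congr' ?_
  filter_upwards [hf0, hg0, eventually_gt_atTop 0] with t hft hgt ht
  rw [Function.comp_apply, id, mul_sub, mul_div_cancel₀ _ ht.ne', mul_div_cancel₀ _ ht.ne',
    exp_sub, exp_log hft, exp_log hgt]

section Geometric

variable {Ω : Type*} [MeasurableSpace Ω] {P : Measure Ω} {X : Ω → ℕ} {p : ℝ}

lemma measure_lt_le_of_geometric (hp0 : 0 ≤ p) (hp1 : p ≤ 1) (hX1 : ∀ ω, 1 ≤ X ω)
    (hX : ∀ k, 1 ≤ k → P {ω | X ω = k} = ENNReal.ofReal (p * (1 - p) ^ (k - 1))) (K : ℕ) :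
    P {ω | X ω < K} ≤ K * ENNReal.ofReal p := by
  have hcover : {ω | X ω < K} ⊆ ⋃ k ∈ Finset.Ico 1 K, {ω | X ω = k} := fun ω hω => by
    simpa using ⟨hX1 ω, hω⟩
  calc P {ω | X ω < K} ≤ ∑ k ∈ Finset.Ico 1 K, P {ω | X ω = k} :=
        (measure_mono hcover).trans (measure_biUnion_finset_le _ _)
    _ ≤ ∑ _k ∈ Finset.Ico 1 K, ENNReal.ofReal p := Finset.sum_le_sum fun k hk => by
        rw [hX k (Finset.mem_Ico.1 hk).1]
        exact ENNReal.ofReal_le_ofReal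
          (mul_le_of_le_one_right hp0 (pow_le_one₀ (by linarith) (by linarith)))
    _ ≤ K * ENNReal.ofReal p := by
        rw [Finset.sum_const, nsmul_eq_mul]
        gcongr
        simp

lemma measure_gt_le_of_geometric (hp0 : 0 < p) (hp1 : p ≤ 1)
    (hX : ∀ k, 1 ≤ k → P {ω | X ω = k} = ENNReal.ofReal (p * (1 - p) ^ (k - 1))) (M : ℕ) :
    P {ω | M < X ω} ≤ ENNReal.ofReal ((1 - p) ^ M) := by
  have h1p : 0 ≤ 1 - p := sub_nonneg.2 hp1
  have hsum : HasSum (fun k : ℕ => p * (1 - p) ^ M * (1 - p) ^ k) ((1 - p) ^ M) := by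
    have h := (hasSum_geometric_of_lt_one h1p (by linarith : 1 - p < 1)).mul_left
      (p * (1 - p) ^ M)
    rwa [sub_sub_cancel, mul_right_comm, mul_inv_cancel₀ hp0.ne', one_mul] at h
  have hcover : {ω | M < X ω} ⊆ ⋃ k : ℕ, {ω | X ω = k + M + 1} := fun ω hω =>
    mem_iUnion.2 ⟨X ω - (M + 1), by simp only [mem_ofPred_eq] at hω ⊢; omega⟩
  calc P {ω | M < X ω} ≤ ∑' k : ℕ, P {ω | X ω = k + M + 1} :=
        (measure_mono hcover).trans (measure_iUnion_le _)
    _ = ∑' k : ℕ, ENNReal.ofReal (p * (1 - p) ^ M * (1 - p) ^ k) := by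
        congr 1
        ext k
        rw [hX _ (by omega), Nat.add_sub_cancel, pow_add, mul_comm ((1 - p) ^ k), mul_assoc]
    _ = ENNReal.ofReal ((1 - p) ^ M) := by
        rw [← ENNReal.ofReal_tsum_of_nonneg
          (fun k => by positivity) hsum.summable, hsum.tsum_eq]

end Geometric

lemma ae_eventually_notMem_of_le_exp {Ω : Type*} [MeasurableSpace Ω] {P : Measure Ω}
    {s : ℕ → Set Ω} {C ε : ℝ} (hε : 0 < ε)
    (hs : ∀ m : ℕ, P (s m) ≤ ENNReal.ofReal (C * exp (-(ε * m)))) :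
    ∀ᵐ ω ∂P, ∀ᶠ m in atTop, ω ∉ s m := by
  have hsum : Summable fun m : ℕ => C * exp (-(ε * m)) := by
    refine (summable_exp_nat_mul_iff.2 (neg_lt_zero.2 hε)).mul_left C |>.congr fun m => ?_
    ring_nf
  exact ae_eventually_notMem (ne_top_of_le_ne_top hsum.tsum_ofReal_ne_top (ENNReal.tsum_le_tsum hs))

section Yule

variable {Ω : Type*} [MeasurableSpace Ω] {P : Measure Ω} {Y : ℝ → Ω → ℕ}
  (hY0 : ∀ ω, Y 0 ω = 1)
  (hYmono : ∀ ω ⦃s t : ℝ⦄, 0 ≤ s → s ≤ t → Y s ω ≤ Y t ω)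
  (hYlaw : ∀ t : ℝ, 0 ≤ t → ∀ k : ℕ, 1 ≤ k →
    P {ω | Y t ω = k} = ENNReal.ofReal (exp (-t) * (1 - exp (-t)) ^ (k - 1)))

include hY0 hYmono hYlaw in
lemma yule_measure_lt_exp_le {t ε : ℝ} (ht : 0 ≤ t) (hε1 : ε ≤ 1) :
    P {ω | (Y t ω : ℝ) < exp ((1 - ε) * t)} ≤ ENNReal.ofReal (2 * exp (-(ε * t))) := by
  set K := ⌈exp ((1 - ε) * t)⌉₊
  refine (measure_mono fun ω hω => Nat.lt_ceil.2 hω).trans <|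
    (measure_lt_le_of_geometric (exp_pos _).le (exp_le_one_iff.2 (by linarith))
      (fun ω => hY0 ω ▸ hYmono ω le_rfl ht) (hYlaw t ht) K).trans ?_
  rw [← ENNReal.ofReal_natCast, ← ENNReal.ofReal_mul (by positivity)]
  refine ENNReal.ofReal_le_ofReal ?_
  have ht' : exp (-t) ≤ exp (-(ε * t)) := exp_le_exp.2 (by nlinarith)
  calc (K : ℝ) * exp (-t) ≤ (exp ((1 - ε) * t) + 1) * exp (-t) := by
        gcongr
        exact (Nat.ceil_lt_add_one (exp_pos _).le).le
    _ = exp (-(ε * t)) + exp (-t) := by rw [add_mul, one_mul, ← exp_add]; ring_nf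
    _ ≤ 2 * exp (-(ε * t)) := by linarith

include hYlaw in
lemma yule_measure_exp_lt_le {t ε : ℝ} (ht : 0 ≤ t) :
    P {ω | exp ((1 + ε) * t) < Y t ω} ≤ ENNReal.ofReal (exp (-(ε * t))) := by
  set M := ⌊exp ((1 + ε) * t)⌋₊
  have hexp : exp (-t) ≤ 1 := exp_le_one_iff.2 (by linarith)
  refine (measure_mono fun ω hω => (Nat.floor_lt (exp_pos _).le).2 hω).trans <|
    (measure_gt_le_of_geometric (exp_pos _) hexp (hYlaw t ht) M).trans ?_
  refine ENNReal.ofReal_le_ofReal ?_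
  have hM : exp (ε * t) - exp (-t) ≤ M * exp (-t) := by
    have h := mul_le_mul_of_nonneg_right (Nat.sub_one_lt_floor (exp ((1 + ε) * t))).le
      (exp_pos (-t)).le
    rwa [sub_mul, one_mul, ← exp_add, show (1 + ε) * t + -t = ε * t by ring] at h
  calc (1 - exp (-t)) ^ M ≤ exp (-exp (-t)) ^ M :=
        pow_le_pow_left₀ (sub_nonneg.2 hexp) (one_sub_le_exp_neg _) M
    _ = exp (-(M * exp (-t))) := by rw [← exp_nat_mul, mul_neg]
    _ ≤ exp (-(ε * t)) := exp_le_exp.2 (by linarith [add_one_le_exp (ε * t)])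

include hY0 hYmono hYlaw in
lemma yule_eventually_abs_log_div_sub_one_le {ε : ℝ} (hε : 0 < ε) (hε1 : ε ≤ 1) :
    ∀ᵐ ω ∂P, ∀ᶠ m : ℕ in atTop, |log (Y m ω) / m - 1| ≤ ε := by
  have hlow := ae_eventually_notMem_of_le_exp hε fun m =>
    yule_measure_lt_exp_le hY0 hYmono hYlaw m.cast_nonneg hε1
  have hup := ae_eventually_notMem_of_le_exp (C := 1) hε fun m => by
    simpa using yule_measure_exp_lt_le (ε := ε) hYlaw m.cast_nonneg
  filter_upwards [hlow, hup] with ω hlowω hupω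
  filter_upwards [hlowω, hupω, eventually_gt_atTop 0] with m hlm hum hm
  simp only [not_lt] at hlm hum
  have hm' : (0 : ℝ) < m := by exact_mod_cast hm
  have hY : (0 : ℝ) < Y m ω := lt_of_lt_of_le (exp_pos _) hlm
  have h1 : (1 - ε) * m ≤ log (Y m ω) := (le_log_iff_exp_le hY).2 hlm
  have h2 : log (Y m ω) ≤ (1 + ε) * m := (log_le_iff_le_exp hY).2 hum
  rw [abs_le, le_sub_iff_add_le, sub_le_iff_le_add, le_div_iff₀ hm', div_le_iff₀ hm']
  constructor <;> linarith

include hY0 hYmono hYlaw in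
lemma yule_tendsto_log_div_nat :
    ∀ᵐ ω ∂P, Tendsto (fun m : ℕ => log (Y m ω) / m) atTop (𝓝 1) := by
  have h := ae_all_iff.2 fun k : ℕ => yule_eventually_abs_log_div_sub_one_le hY0 hYmono hYlaw
    (ε := 1 / (k + 1)) (by positivity) (div_le_one_of_le₀ (by simp) (by positivity))
  filter_upwards [h] with ω hω
  refine Metric.tendsto_nhds.2 fun ε hε => ?_
  obtain ⟨k, hk⟩ := exists_nat_one_div_lt hε
  exact (hω k).mono fun m hm => (Real.dist_eq _ _).trans_lt (hm.trans_lt hk)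

include hY0 hYmono hYlaw in
lemma yule_tendsto_log_div :
    ∀ᵐ ω ∂P, Tendsto (fun s => log (Y s ω) / s) atTop (𝓝 1) := by
  filter_upwards [yule_tendsto_log_div_nat hY0 hYmono hYlaw] with ω hω
  refine tendsto_div_of_monotoneOn_of_tendsto_nat (fun s hs t ht hst => ?_) hω
  have hY : (1 : ℝ) ≤ Y s ω := by exact_mod_cast hY0 ω ▸ hYmono ω le_rfl hs
  exact log_le_log (by linarith) (by exact_mod_cast hYmono ω hs hst)

end Yule

lemma ae_exists_rat_gt_measure_Ioi_ne_zero (μ : Measure ℝ)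
    (hnoatom : ∀ a : ℝ, μ (Ioi a) = 0 → μ {a} = 0) :
    ∀ᵐ (x : ℝ) ∂μ, ∃ r : ℚ, x < r ∧ μ (Ioi (r : ℝ)) ≠ 0 := by
  set U := ⋃ r : {r : ℚ // μ (Ioi (r : ℝ)) = 0}, Ioi ((r : ℚ) : ℝ)
  have hU : μ U = 0 := measure_iUnion_null fun r => r.2
  set T := {x : ℝ | ∀ r : ℚ, x < r → μ (Ioi (r : ℝ)) = 0}
  have hIoi : ∀ x ∈ T, Ioi x ⊆ U := fun x hx y hy => by
    obtain ⟨r, hxr, hry⟩ := exists_rat_btwn (mem_Ioi.1 hy)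
    exact mem_iUnion.2 ⟨⟨r, hx r hxr⟩, hry⟩
  -- Points of `T` outside the null set `U` bound `T` from below, so there is at most one.
  have hsub : (T \ U).Subsingleton := fun x hx y hy => by
    by_contra hne
    rcases lt_or_gt_of_ne hne with h | h
    exacts [hy.2 (hIoi x hx.1 h), hx.2 (hIoi y hy.1 h)]
  have hTU : μ (T \ U) = 0 := by
    rcases hsub.eq_empty_or_singleton with h | ⟨a, h⟩
    · rw [h, measure_empty]
    · rw [h]
      exact hnoatom a (measure_mono_null (hIoi a (h ▸ mem_singleton a).1) hU)
  rw [ae_iff]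
  refine measure_mono_null (fun x hx => ?_) (measure_union_null hU hTU)
  have hxT : x ∈ T := by simpa [T] using hx
  by_cases hxU : x ∈ U
  exacts [Or.inl hxU, Or.inr ⟨hxT, hxU⟩]

section Independence

variable {Ω : Type*} [MeasurableSpace Ω] {P : Measure Ω}

lemma measure_iInter_preimage_eq_zero_of_iIndepFun {β : Type*} [MeasurableSpace β]
    {X : ℕ → Ω → β} (hX : iIndepFun X P) {A : Set β} (hA : MeasurableSet A) {c : ℝ≥0∞}
    (hc : c < 1) (hXA : ∀ n, P (X n ⁻¹' A) ≤ c) :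
    P (⋂ n, X n ⁻¹' A) = 0 := by
  refine le_antisymm (ge_of_tendsto' (ENNReal.tendsto_pow_atTop_nhds_zero_of_lt_one hc)
    fun N => ?_) zero_le
  calc P (⋂ n, X n ⁻¹' A) ≤ P (⋂ n ∈ Finset.range N, X n ⁻¹' A) :=
        measure_mono fun ω hω => mem_iInter₂.2 fun n _ => mem_iInter.1 hω n
    _ = ∏ n ∈ Finset.range N, P (X n ⁻¹' A) :=
        hX.measure_inter_preimage_eq_mul _ fun _ _ => hA
    _ ≤ c ^ N := by
        simpa using Finset.prod_le_pow_card (Finset.range N) _ _ fun n _ => hXA n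

lemma ae_exists_gt_of_iIndepFun {μ : Measure ℝ} [IsProbabilityMeasure μ] {X : ℕ → Ω → ℝ}
    (hX : iIndepFun X P) (hXm : ∀ n, Measurable (X n)) (hXμ : ∀ n, P.map (X n) = μ)
    (hnoatom : ∀ a : ℝ, μ (Ioi a) = 0 → μ {a} = 0) :
    ∀ᵐ ω ∂P, ∀ i, ∃ j ≠ i, X i ω < X j ω := by
  have hlaw : ∀ n (s : Set ℝ), MeasurableSet s → P (X n ⁻¹' s) = μ s := fun n s hs => by
    rw [← hXμ n, Measure.map_apply (hXm n) hs]
  have hexceeds : ∀ i (r : {r : ℚ // μ (Ioi (r : ℝ)) ≠ 0}),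
      ∀ᵐ ω ∂P, ∃ j ≠ i, (r : ℝ) < X j ω := fun i r => by
    have hlt : μ (Iic ((r : ℚ) : ℝ)) < 1 := by
      rw [← compl_Ioi, prob_compl_eq_one_sub measurableSet_Ioi]
      exact ENNReal.sub_lt_self ENNReal.one_ne_top one_ne_zero r.2
    have hnull := measure_iInter_preimage_eq_zero_of_iIndepFun
      (hX.precomp (g := fun n => n + (i + 1)) (add_left_injective (i + 1))) measurableSet_Iic hlt
      fun n => (hlaw _ _ measurableSet_Iic).le
    filter_upwards [measure_eq_zero_iff_ae_notMem.1 hnull] with ω hω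
    simp only [mem_iInter, mem_preimage, mem_Iic, not_forall, not_le] at hω
    obtain ⟨n, hn⟩ := hω
    exact ⟨n + (i + 1), by omega, hn⟩
  have hbelow : ∀ i, ∀ᵐ ω ∂P, ∃ r : ℚ, X i ω < r ∧ μ (Ioi (r : ℝ)) ≠ 0 := fun i =>
    ae_of_ae_map (hXm i).aemeasurable (p := fun x => ∃ r : ℚ, x < r ∧ μ (Ioi (r : ℝ)) ≠ 0)
      (by rw [hXμ i]; exact ae_exists_rat_gt_measure_Ioi_ne_zero μ hnoatom)
  filter_upwards [ae_all_iff.2 fun i => ae_all_iff.2 (hexceeds i), ae_all_iff.2 hbelow]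
    with ω hexceedsω hbelowω i
  obtain ⟨r, hir, hr⟩ := hbelowω i
  obtain ⟨j, hji, hrj⟩ := hexceedsω i ⟨r, hr⟩
  exact ⟨j, hji, hir.trans hrj⟩

lemma ae_tendsto_sum_atTop_of_exponential [IsProbabilityMeasure P] {θ : ℝ} {E : ℕ → Ω → ℝ}
    (hE : iIndepFun E P) (hEm : ∀ n, Measurable (E n))
    (hElaw : ∀ n, ∀ x : ℝ, 0 ≤ x → P {ω | x < E n ω} = ENNReal.ofReal (exp (-θ * x))) :
    ∀ᵐ ω ∂P, Tendsto (fun n => ∑ i ∈ Finset.range n, E i ω) atTop atTop := by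
  have hIic : ∀ n (x : ℝ), 0 ≤ x → P (E n ⁻¹' Iic x) = 1 - ENNReal.ofReal (exp (-θ * x)) :=
    fun n x hx => by
      rw [← compl_Ioi, preimage_compl, prob_compl_eq_one_sub (hEm n measurableSet_Ioi),
        ← hElaw n x hx]
      rfl
  have hnonneg : ∀ᵐ ω ∂P, ∀ n, 0 ≤ E n ω := ae_all_iff.2 fun n => by
    rw [ae_iff]
    refine measure_mono_null (t := E n ⁻¹' Iic 0) (fun ω hω => (not_le.1 hω).le) ?_
    rw [hIic n 0 le_rfl]
    simp
  have hexceeds : ∀ᵐ ω ∂P, ∀ t : ℕ, ∃ n, (t : ℝ) < E n ω := ae_all_iff.2 fun t => by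
    have hnull := measure_iInter_preimage_eq_zero_of_iIndepFun hE measurableSet_Iic
      (ENNReal.sub_lt_self ENNReal.one_ne_top one_ne_zero (ENNReal.ofReal_pos.2 (exp_pos _)).ne')
      fun n => (hIic n t t.cast_nonneg).le
    filter_upwards [measure_eq_zero_iff_ae_notMem.1 hnull] with ω hω
    simpa using hω
  filter_upwards [hnonneg, hexceeds] with ω hnonnegω hexceedsω
  refine tendsto_atTop_atTop_of_monotone (fun a b hab => Finset.sum_le_sum_of_subset_of_nonneg
    (Finset.range_mono hab) fun i _ _ => hnonnegω i) fun b => ?_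
  obtain ⟨n, hn⟩ := hexceedsω ⌈b⌉₊
  exact ⟨n + 1, (Nat.le_ceil b).trans <| hn.le.trans <|
    Finset.single_le_sum (fun i _ => hnonnegω i) (Finset.self_mem_range_succ n)⟩

end Independence

section Table

variable {y : ℝ → ℕ} (hy0 : y 0 = 1) (hymono : ∀ ⦃s t : ℝ⦄, 0 ≤ s → s ≤ t → y s ≤ y t)
  {w a : ℝ} (hw : 0 < w) {z : ℝ → ℕ}
  (hz : ∀ t, z t = if a ≤ t then y (w * (t - a)) else 0)

include hz in
lemma eventually_table_eq : ∀ᶠ t in atTop, z t = y (w * (t - a)) := by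
  filter_upwards [eventually_ge_atTop a] with t ht
  rw [hz, if_pos ht]

include hy0 hymono hw hz in
lemma eventually_table_pos : ∀ᶠ t in atTop, (0 : ℝ) < z t := by
  filter_upwards [eventually_table_eq hz, eventually_ge_atTop a] with t hzt ht
  have h := hymono le_rfl (mul_nonneg hw.le (sub_nonneg.2 ht))
  rw [hy0] at h
  rw [hzt]
  exact_mod_cast h

include hw hz in
lemma tendsto_log_table_div (hy : Tendsto (fun s => log (y s) / s) atTop (𝓝 1)) :
    Tendsto (fun t => log (z t) / t) atTop (𝓝 w) :=
  (tendsto_log_comp_affine_div a hw hy).congr' <| by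
    filter_upwards [eventually_table_eq hz] with t ht
    rw [ht]

end Table

lemma summable_of_tendsto_atTop_of_eq_zero {τ : ℕ → ℝ} (hτ : Tendsto τ atTop atTop)
    {u : ℕ → ℝ} {t : ℝ} (hu : ∀ n, t < τ n → u n = 0) : Summable u := by
  obtain ⟨n₀, hn₀⟩ := eventually_atTop.1 (hτ.eventually_gt_atTop t)
  exact summable_of_ne_finset_zero (s := Finset.range n₀) fun n hn =>
    hu n (hn₀ n (by simpa using hn))

theorem crp_fixed_table_microscopic_general
    {Ω : Type*} [MeasurableSpace Ω] (P : Measure Ω) [IsProbabilityMeasure P]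
    (θ : ℝ)
    (μ : Measure ℝ) [IsProbabilityMeasure μ] (hμsupp : μ (Set.Iic 0) = 0)
    (hnoatom : ∀ a : ℝ, μ (Set.Ioi a) = 0 → μ {a} = 0)
    (W : ℕ → Ω → ℝ) (hWmeas : ∀ n, Measurable (W n))
    (hWlaw : ∀ n, Measure.map (W n) P = μ)
    (E : ℕ → Ω → ℝ) (hEmeas : ∀ n, Measurable (E n))
    (hElaw : ∀ n, ∀ x : ℝ, 0 ≤ x → P {ω | x < E n ω} = ENNReal.ofReal (Real.exp (-θ * x)))
    (τ : ℕ → Ω → ℝ) (hτ : ∀ n ω, τ n ω = ∑ i ∈ Finset.range n, E i ω)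
    (Y : ℕ → ℝ → Ω → ℕ)
    (hY0 : ∀ n ω, Y n 0 ω = 1)
    (hYmono : ∀ n ω ⦃s t : ℝ⦄, 0 ≤ s → s ≤ t → Y n s ω ≤ Y n t ω)
    (hYlaw : ∀ n, ∀ t : ℝ, 0 ≤ t → ∀ k : ℕ, 1 ≤ k →
      P {ω | Y n t ω = k} =
        ENNReal.ofReal (Real.exp (-t) * (1 - Real.exp (-t)) ^ (k - 1)))
    (hindep : iIndep (fun i : ℕ ⊕ ℕ ⊕ ℕ =>
      Sum.elim (fun n => MeasurableSpace.comap (W n) inferInstance)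
        (Sum.elim (fun n => MeasurableSpace.comap (E n) inferInstance)
          (fun n => MeasurableSpace.comap (fun ω s => Y n s ω) inferInstance)) i) P)
    (Z : ℕ → ℝ → Ω → ℕ)
    (hZ : ∀ n t ω, Z n t ω = if τ n ω ≤ t then Y n (W n ω * (t - τ n ω)) ω else 0)
    (Nt : ℝ → Ω → ℝ) (hN : ∀ t ω, Nt t ω = ∑' n, (Z n t ω : ℝ)) :
    ∀ i : ℕ, ∀ᵐ ω ∂P,
      Tendsto (fun t => (Z i t ω : ℝ)) atTop atTop ∧
      Tendsto (fun t => (Z i t ω : ℝ) / Nt t ω) atTop (nhds 0) := by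
  intro i
  have hWpos : ∀ᵐ ω ∂P, ∀ n, 0 < W n ω := ae_all_iff.2 fun n =>
    ae_of_ae_map (hWmeas n).aemeasurable (p := fun x => 0 < x)
      (by rw [hWlaw n, ae_iff]; exact measure_mono_null (fun x hx => not_lt.1 hx) hμsupp)
  have hWgt := ae_exists_gt_of_iIndepFun (hindep.precomp Sum.inl_injective) hWmeas hWlaw hnoatom
  have hτlim := ae_tendsto_sum_atTop_of_exponential
    (hindep.precomp (Sum.inr_injective.comp Sum.inl_injective)) hEmeas hElaw
  have hYlim := ae_all_iff.2 fun n => yule_tendsto_log_div (hY0 n) (hYmono n) (hYlaw n)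
  filter_upwards [hWpos, hWgt, hτlim, hYlim] with ω hWω hWgtω hτω hYω
  simp only [← hτ] at hτω
  have hZpos n := eventually_table_pos (hY0 n ω) (hYmono n ω) (hWω n) (hZ n · ω)
  have hlogZ n := tendsto_log_table_div (hWω n) (hZ n · ω) (hYω n)
  have hZN t : (0 : ℝ) ≤ Nt t ω ∧ ∀ j, (Z j t ω : ℝ) ≤ Nt t ω := by
    have hsum : Summable fun n => (Z n t ω : ℝ) :=
      summable_of_tendsto_atTop_of_eq_zero (t := t) hτω fun n hn => by simp [hZ, not_le.2 hn]
    exact ⟨hN t ω ▸ tsum_nonneg fun n => by positivity,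
      fun j => hN t ω ▸ hsum.le_tsum j fun n _ => by positivity⟩
  obtain ⟨j, -, hij⟩ := hWgtω i
  refine ⟨tendsto_atTop_of_tendsto_log_div (hWω i) (.of_forall fun t => by positivity)
    (hlogZ i), ?_⟩
  refine tendsto_of_tendsto_of_tendsto_of_le_of_le' tendsto_const_nhds
    (tendsto_div_zero_of_tendsto_log_div hij (hZpos i) (hZpos j) (hlogZ i) (hlogZ j))
    (.of_forall fun t => div_nonneg (by positivity) (hZN t).1) ?_
  filter_upwards [hZpos j] with t ht
  exact div_le_div_of_nonneg_left (by positivity) ht ((hZN t).2 j)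

/-- In the continuous-time disordered Chinese restaurant process (tables created at the
partial sums `τ_n` of i.i.d. rate-`θ` exponentials, weights `W_n` i.i.d. with law `μ`
having no atom at its essential supremum, sizes `Z_n(t) = Y_n(W_n (t - τ_n)) 1_{t ≥ τ_n}`
for i.i.d. rate-1 Yule processes, all jointly independent), for every fixed table `i`,
almost surely `Z_i(t) → ∞` and `Z_i(t)/N(t) → 0` as `t → ∞`, where `N(t)` is the total
number of customers. -/
theorem crp_fixed_table_microscopic
    {Ω : Type*} [MeasurableSpace Ω] (P : Measure Ω) [IsProbabilityMeasure P]
    (θ : ℝ) (hθ : 0 < θ)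
    (μ : Measure ℝ) [IsProbabilityMeasure μ] (hμsupp : μ (Set.Iic 0) = 0)
    (hnoatom : ∀ a : ℝ, μ (Set.Ioi a) = 0 → μ {a} = 0)
    (W : ℕ → Ω → ℝ) (hWmeas : ∀ n, Measurable (W n))
    (hWlaw : ∀ n, Measure.map (W n) P = μ)
    (E : ℕ → Ω → ℝ) (hEmeas : ∀ n, Measurable (E n))
    (hElaw : ∀ n, ∀ x : ℝ, 0 ≤ x → P {ω | x < E n ω} = ENNReal.ofReal (Real.exp (-θ * x)))
    (τ : ℕ → Ω → ℝ) (hτ : ∀ n ω, τ n ω = ∑ i ∈ Finset.range n, E i ω)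
    (Y : ℕ → ℝ → Ω → ℕ)
    (hY0 : ∀ n ω, Y n 0 ω = 1)
    (hYmono : ∀ n ω ⦃s t : ℝ⦄, 0 ≤ s → s ≤ t → Y n s ω ≤ Y n t ω)
    (hYlaw : ∀ n, ∀ t : ℝ, 0 ≤ t → ∀ k : ℕ, 1 ≤ k →
      P {ω | Y n t ω = k} =
        ENNReal.ofReal (Real.exp (-t) * (1 - Real.exp (-t)) ^ (k - 1)))
    (hindep : iIndep (fun i : ℕ ⊕ ℕ ⊕ ℕ =>
      Sum.elim (fun n => MeasurableSpace.comap (W n) inferInstance)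
        (Sum.elim (fun n => MeasurableSpace.comap (E n) inferInstance)
          (fun n => MeasurableSpace.comap (fun ω s => Y n s ω) inferInstance)) i) P)
    (Z : ℕ → ℝ → Ω → ℕ)
    (hZ : ∀ n t ω, Z n t ω = if τ n ω ≤ t then Y n (W n ω * (t - τ n ω)) ω else 0)
    (Nt : ℝ → Ω → ℝ) (hN : ∀ t ω, Nt t ω = ∑' n, (Z n t ω : ℝ)) :
    ∀ i : ℕ, ∀ᵐ ω ∂P,
      Tendsto (fun t => (Z i t ω : ℝ)) atTop atTop ∧
      Tendsto (fun t => (Z i t ω : ℝ) / Nt t ω) atTop (nhds 0) :=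
  crp_fixed_table_microscopic_general P θ μ hμsupp hnoatom W hWmeas hWlaw E hEmeas hElaw τ hτ Y hY0
    hYmono hYlaw hindep Z hZ Nt hN
end

section
/- Let (S_i(n))_{i≥1, n≥0} be a sequence-valued process with S_i(n) ∈ ℕ, Σ_i S_i(n) = n+1, such that for every fixed i, S_i(n)/n → 0 as n→∞ (pointwise on some event of probability 1), and such that at each step exactly one coordinate increases by 1. Then on that event it is not the case that max_i S_i(n)/n → 1; i.e., the proportion of customers at the largest table cannot converge to 1 almost surely if every fixed table is asymptotically microscopic. -/
open Filter
open scoped ENNReal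

/-!
Since the tables partition `n + 1` customers, for `n ≥ 3` at most one table holds more than
three quarters of them. Tables never shrink, so the table that is large at time `n` still holds
more than `3n/4` at time `n + 1`, and that leaves no room for another table to be the large one.
Hence, if the largest proportion stays above `3/4` from time `N` on, the table large at time
`N` stays large forever, contradicting that every fixed table is microscopic.
-/

lemma add_le_of_tsum_natCast_eq {ι : Type*} {f : ι → ℕ} {m : ℕ}
    (h : ∑' k, (f k : ℝ≥0∞) = m) {i j : ι} (hij : i ≠ j) : f i + f j ≤ m := by
  classical
  have hle : ∑ k ∈ {i, j}, (f k : ℝ≥0∞) ≤ m := h ▸ ENNReal.sum_le_tsum _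
  rw [Finset.sum_pair hij] at hle
  exact_mod_cast hle

lemma monotone_of_forall_exists_add_one {ι : Type*} {S : ι → ℕ → ℕ}
    (hstep : ∀ n, ∃ k, S k (n + 1) = S k n + 1 ∧ ∀ j, j ≠ k → S j (n + 1) = S j n) (i : ι) :
    Monotone (S i) := by
  refine monotone_nat_of_le_succ fun n => ?_
  obtain ⟨k, hk, hother⟩ := hstep n
  obtain rfl | hik := eq_or_ne i k
  · omega
  · exact (hother i hik).ge

lemma eventually_exists_lt_of_tendsto_iSup {α ι : Type*} [Nonempty ι] {l : Filter α}
    {f : α → ι → ℝ} {a b : ℝ} (h : Tendsto (fun x => ⨆ i, f x i) l (nhds a)) (hb : b < a) :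
    ∀ᶠ x in l, ∃ i, b < f x i :=
  (h.eventually (eventually_gt_nhds hb)).mono fun _ hx => exists_lt_of_lt_ciSup hx

lemma three_quarters_lt_div_iff {a n : ℕ} (hn : 0 < n) :
    (3 / 4 : ℝ) < a / n ↔ 3 * n < 4 * a := by
  rw [lt_div_iff₀ (by exact_mod_cast hn), ← Nat.cast_lt (α := ℝ)]
  push_cast
  constructor <;> intro h <;> linarith

lemma exists_forever_large_table {ι : Type*} {S : ι → ℕ → ℕ} {N : ℕ} (hN : 3 ≤ N)
    (hmono : ∀ i, Monotone (S i)) (hpair : ∀ n i j, i ≠ j → S i n + S j n ≤ n + 1)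
    (hlarge : ∀ n ≥ N, ∃ j, 3 * n < 4 * S j n) :
    ∃ i, ∀ n ≥ N, 3 * n < 4 * S i n := by
  obtain ⟨i, hi⟩ := hlarge N le_rfl
  refine ⟨i, fun n hn => ?_⟩
  induction n, hn using Nat.le_induction with
  | base => exact hi
  | succ n hn ih =>
    obtain ⟨j, hj⟩ := hlarge (n + 1) (by omega)
    obtain rfl | hji := eq_or_ne j i
    · exact hj
    · have := hpair (n + 1) i j hji.symm
      have := hmono i (n.le_add_right 1)
      omega

/-- If `(S_i(n))` is a table-occupancy process with `Σ_i S_i(n) = n+1`, at each step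
exactly one coordinate increasing by 1, and every fixed table asymptotically microscopic
(`S_i(n)/n → 0`), then the proportion of customers at the largest table cannot converge
to 1. -/
theorem largest_table_proportion_not_tendsto_one
    (S : ℕ → ℕ → ℕ)
    (htotal : ∀ n, ∑' i, (S i n : ℝ≥0∞) = n + 1)
    (hstep : ∀ n, ∃ i, S i (n + 1) = S i n + 1 ∧ ∀ j, j ≠ i → S j (n + 1) = S j n)
    (hmicro : ∀ i, Tendsto (fun n : ℕ => (S i n : ℝ) / n) atTop (nhds 0)) :
    ¬ Tendsto (fun n : ℕ => ⨆ i, (S i n : ℝ) / n) atTop (nhds 1) := by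
  intro hsup
  have hpair : ∀ n i j, i ≠ j → S i n + S j n ≤ n + 1 := fun n _ _ hij =>
    add_le_of_tsum_natCast_eq (m := n + 1) (by push_cast; exact htotal n) hij
  obtain ⟨N, hN⟩ := eventually_atTop.mp <|
    eventually_exists_lt_of_tendsto_iSup hsup (by norm_num : (3 / 4 : ℝ) < 1)
  obtain ⟨i, hi⟩ := exists_forever_large_table (le_max_right N 3)
    (monotone_of_forall_exists_add_one hstep) hpair fun n hn => by
      obtain ⟨j, hj⟩ := hN n (le_of_max_le_left hn)
      exact ⟨j, (three_quarters_lt_div_iff (by omega)).1 hj⟩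
  obtain ⟨n, hsmall, hn⟩ :=
    ((hmicro i).eventually (eventually_lt_nhds (by norm_num : (0 : ℝ) < 3 / 4))).and
      (eventually_ge_atTop (max N 3)) |>.exists
  have hn3 : 3 ≤ n := le_of_max_le_right hn
  exact hsmall.not_gt ((three_quarters_lt_div_iff (by omega)).2 (hi n hn))
end
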